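/- arXiv:1209.5550 — 9 statements merged into one kernel-verified Lean document; each statement's English description precedes it below -/
import Mathlib

section
/- Let A be a finite-dimensional commutative associative unital ℂ-algebra with a nondegenerate symmetric bilinear form ⟨·,·⟩ satisfying ⟨x∘y, z⟩ = ⟨x, y∘z⟩ for all x,y,z (a Frobenius algebra). Let n ∈ A be nilpotent, I = (n) the ideal generated by n, and define the bilinear form on I by (x,y)₀ = ⟨x̃, n∘ỹ⟩ where x = n∘x̃, y = n∘ỹ. Then (·,·)₀ is well-defined (independent of the choice of x̃, ỹ), symmetric, and nondegenerate on I. -/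
theorem LinearMap.apply_mul_eq_apply_mul_of_assoc {R A M : Type*} [CommSemiring R] [CommSemiring A]
    [Module R A] [AddCommMonoid M] [Module R M] (B : A →ₗ[R] A →ₗ[R] M)
    (hfrob : ∀ x y z : A, B (x * y) z = B x (y * z)) (n x y : A) :
    B x (n * y) = B (n * x) y := by
  rw [← hfrob, mul_comm x n]

theorem stmt0_general {A : Type*} [CommRing A] [Algebra ℂ A]
    (B : A →ₗ[ℂ] A →ₗ[ℂ] ℂ)
    (hsymm : ∀ x y : A, B x y = B y x)
    (hnondeg : ∀ x : A, (∀ y : A, B x y = 0) → x = 0)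
    (hfrob : ∀ x y z : A, B (x * y) z = B x (y * z))
    (n : A) :
    (∀ x₁ x₂ y₁ y₂ : A, n * x₁ = n * x₂ → n * y₁ = n * y₂ →
      B x₁ (n * y₁) = B x₂ (n * y₂)) ∧
    (∀ x y : A, B x (n * y) = B y (n * x)) ∧
    (∀ x : A, (∀ y : A, B x (n * y) = 0) → n * x = 0) := by
  have shift := B.apply_mul_eq_apply_mul_of_assoc hfrob n
  refine ⟨fun x₁ x₂ y₁ y₂ hx hy => ?_, fun x y => ?_, fun x hx => ?_⟩
  · rw [shift, hx, ← shift, hy]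
  · rw [shift, hsymm]
  · exact hnondeg _ fun y => shift x y ▸ hx y

/-- In a Frobenius algebra `(A, B)` with a nilpotent element `n`,
the pairing `(x,y)₀ := B x̃ (n * ỹ)` (for `x = n * x̃`, `y = n * ỹ`) on the
principal ideal `I = (n)` is well-defined, symmetric, and nondegenerate. -/
theorem stmt0 {A : Type*} [CommRing A] [Algebra ℂ A] [FiniteDimensional ℂ A]
    (B : A →ₗ[ℂ] A →ₗ[ℂ] ℂ)
    (hsymm : ∀ x y : A, B x y = B y x)
    (hnondeg : ∀ x : A, (∀ y : A, B x y = 0) → x = 0)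
    (hfrob : ∀ x y z : A, B (x * y) z = B x (y * z))
    (n : A) (hn : IsNilpotent n) :
    (∀ x₁ x₂ y₁ y₂ : A, n * x₁ = n * x₂ → n * y₁ = n * y₂ →
      B x₁ (n * y₁) = B x₂ (n * y₂)) ∧
    (∀ x y : A, B x (n * y) = B y (n * x)) ∧
    (∀ x : A, (∀ y : A, B x (n * y) = 0) → n * x = 0) :=
  stmt0_general B hsymm hnondeg hfrob n
end

section
/- Let (A, ⟨·,·⟩) be a Frobenius algebra, n ∈ A nilpotent of order d (n^d = 0, n^{d-1} ≠ 0), J_k = {x : x∘n^k = 0}, I = (n), I_{-1} = 0, I_0 = I, and I_k = I + J_k for 1 ≤ k ≤ d. Then for each k with 1 ≤ k ≤ d, the pairing on I_k/I_{k-1} induced by (x,y)_k := ⟨x̃, ỹ ∘ n^{k-1}⟩ (for representatives x̃, ỹ ∈ J_k) is well-defined, symmetric, nondegenerate, and satisfies (a∘x, y)_k = (x, a∘y)_k for all a ∈ A/I_{k-1}. -/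
/-! Invariance `B (x * y) z = B x (y * z)` makes `B x y = B (x * y) 1` a function of the product
alone. Hence `B` is symmetric, and since `I_{k-1} * J_k * n^{k-1} = 0` the pairing
`(x, y)_k = B x (y * n^{k-1})` is well defined on `I_k / I_{k-1}`, symmetric and `A`-balanced.
Nondegeneracy comes from the duality `(ker (· * m))^⊥ = A * m` of a Frobenius algebra: if `x`
pairs trivially with `J_k`, then `x * n^{k-1}` is orthogonal to `J_k = ker (· * n^k)`, so
`x * n^{k-1} = z * n^k` and `x = z * n + (x - z * n)` with `x - z * n ∈ J_{k-1}`. -/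

namespace LinearMap.BilinForm

section Invariant

variable {R A : Type*} [CommSemiring R] [CommSemiring A] [Algebra R A]
  {B : LinearMap.BilinForm R A}

lemma apply_eq_apply_mul_one (hB : ∀ x y z : A, B (x * y) z = B x (y * z)) (x y : A) :
    B x y = B (x * y) 1 := by
  rw [hB, mul_one]

lemma apply_eq_of_mul_eq (hB : ∀ x y z : A, B (x * y) z = B x (y * z)) {x y x' y' : A}
    (h : x * y = x' * y') : B x y = B x' y' := by
  rw [apply_eq_apply_mul_one hB, h, ← apply_eq_apply_mul_one hB]

lemma isSymm_of_invariant (hB : ∀ x y z : A, B (x * y) z = B x (y * z)) : B.IsSymm :=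
  ⟨fun x y => apply_eq_of_mul_eq hB (mul_comm x y)⟩

end Invariant

section Frobenius

variable {K A : Type*} [Field K] [CommRing A] [Algebra K A] {B : LinearMap.BilinForm K A}

lemma orthogonal_range_mulRight (hB : ∀ x y z : A, B (x * y) z = B x (y * z))
    (hB₀ : B.SeparatingLeft) (m : A) :
    B.orthogonal (mulRight K m).range = (mulRight K m).ker := by
  ext y
  rw [mem_orthogonal_iff]
  simp only [LinearMap.mem_range, LinearMap.mem_ker, LinearMap.mulRight_apply,
    forall_exists_index, forall_apply_eq_imp_iff]
  refine ⟨fun h => hB₀ _ fun z => ?_, fun h z => ?_⟩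
  · rw [apply_eq_of_mul_eq hB (by ring : y * m * z = z * m * y)]
    exact h z
  · rw [apply_eq_of_mul_eq hB (by ring : z * m * y = y * m * z), h, map_zero,
      LinearMap.zero_apply]

lemma orthogonal_ker_mulRight [FiniteDimensional K A]
    (hB : ∀ x y z : A, B (x * y) z = B x (y * z)) (hB₀ : B.SeparatingLeft) (m : A) :
    B.orthogonal (mulRight K m).ker = (mulRight K m).range := by
  have hrefl : B.IsRefl := (isSymm_of_invariant hB).isRefl
  rw [← orthogonal_range_mulRight hB hB₀,
    orthogonal_orthogonal (hrefl.nondegenerate_iff_separatingLeft.mpr hB₀) hrefl]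

end Frobenius

end LinearMap.BilinForm

open LinearMap.BilinForm

section NilpotentFiltration

variable (R : Type*) {A : Type*} [CommRing R] [CommRing A] [Algebra R A]

/-- `J_j` in the paper's notation. -/
abbrev kerMulPow (n : A) (j : ℕ) : Submodule R A :=
  LinearMap.ker (LinearMap.mulRight R (n ^ j))

/-- `I_j = (n) + J_j` in the paper's notation. -/
abbrev nilFiltration (n : A) (j : ℕ) : Submodule R A :=
  LinearMap.range (LinearMap.mulRight R n) ⊔ kerMulPow R n j

variable {R}

lemma mem_kerMulPow {n x : A} {j : ℕ} : x ∈ kerMulPow R n j ↔ x * n ^ j = 0 :=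
  Iff.rfl

lemma exists_kerMulPow_sub_mem_nilFiltration {n x : A} {j : ℕ} (hx : x ∈ nilFiltration R n j)
    (i : ℕ) : ∃ x' ∈ kerMulPow R n j, x - x' ∈ nilFiltration R n i := by
  obtain ⟨_, ⟨z, rfl⟩, x', hx', rfl⟩ := Submodule.mem_sup.mp hx
  refine ⟨x', hx', ?_⟩
  rw [add_sub_cancel_right]
  exact Submodule.mem_sup_left (LinearMap.mem_range_self _ z)

lemma mul_mul_pow_eq_zero_of_mem_nilFiltration {n u v : A} {k : ℕ}
    (hu : u ∈ nilFiltration R n k) (hv : v ∈ kerMulPow R n (k + 1)) : u * (v * n ^ k) = 0 := by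
  obtain ⟨_, ⟨z, rfl⟩, j, hj, rfl⟩ := Submodule.mem_sup.mp hu
  rw [mem_kerMulPow] at hj hv
  simp only [LinearMap.mulRight_apply]
  linear_combination z * hv + v * hj

end NilpotentFiltration

lemma mem_nilFiltration_of_pairing_eq_zero {K A : Type*} [Field K] [CommRing A] [Algebra K A]
    [FiniteDimensional K A] {B : LinearMap.BilinForm K A}
    (hB : ∀ x y z : A, B (x * y) z = B x (y * z)) (hB₀ : B.SeparatingLeft) {n x : A} {k : ℕ}
    (hx : ∀ y ∈ kerMulPow K n (k + 1), B x (y * n ^ k) = 0) : x ∈ nilFiltration K n k := by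
  have hperp : x * n ^ k ∈ B.orthogonal (kerMulPow K n (k + 1)) := fun y hy => by
    rw [apply_eq_of_mul_eq hB (mul_left_comm y x _)]
    exact hx y hy
  rw [orthogonal_ker_mulRight hB hB₀] at hperp
  obtain ⟨z, hz⟩ := hperp
  rw [LinearMap.mulRight_apply] at hz
  have hrest : x - z * n ∈ kerMulPow K n k := by
    rw [mem_kerMulPow]
    linear_combination -hz
  rw [← add_sub_cancel (z * n) x]
  exact Submodule.add_mem_sup (LinearMap.mem_range_self (LinearMap.mulRight K n) z) hrest

theorem stmt2_general {A : Type*} [CommRing A] [Algebra ℂ A] [FiniteDimensional ℂ A]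
    (B : A →ₗ[ℂ] A →ₗ[ℂ] ℂ)
    (hnondeg : ∀ x : A, (∀ y : A, B x y = 0) → x = 0)
    (hfrob : ∀ x y z : A, B (x * y) z = B x (y * z))
    (n : A)
    (k : ℕ) (hk1 : 1 ≤ k) :
    let J : ℕ → Submodule ℂ A := fun j => LinearMap.ker (LinearMap.mulRight ℂ (n ^ j))
    let I : ℕ → Submodule ℂ A := fun j => LinearMap.range (LinearMap.mulRight ℂ n) ⊔ J j
    -- every element of I_k has a representative in J_k modulo I_{k-1}
    (∀ x ∈ I k, ∃ x' ∈ J k, x - x' ∈ I (k - 1)) ∧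
    -- well-definedness
    (∀ x y x' y' : A, x ∈ J k → y ∈ J k → x' ∈ J k → y' ∈ J k →
      x - x' ∈ I (k - 1) → y - y' ∈ I (k - 1) →
      B x (y * n ^ (k - 1)) = B x' (y' * n ^ (k - 1))) ∧
    -- symmetry
    (∀ x y : A, x ∈ J k → y ∈ J k →
      B x (y * n ^ (k - 1)) = B y (x * n ^ (k - 1))) ∧
    -- nondegeneracy on the graded quotient
    (∀ x ∈ J k, (∀ y ∈ J k, B x (y * n ^ (k - 1)) = 0) → x ∈ I (k - 1)) ∧
    -- compatibility with the A/I_{k-1}-module structure (Frobenius property)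
    (∀ a x y : A, x ∈ J k → y ∈ J k →
      B (a * x) (y * n ^ (k - 1)) = B x ((a * y) * n ^ (k - 1))) := by
  intro J I
  obtain ⟨k, rfl⟩ : ∃ j, k = j + 1 := ⟨k - 1, by omega⟩
  simp only [Nat.add_sub_cancel]
  refine ⟨fun x hx => exists_kerMulPow_sub_mem_nilFiltration hx k,
    fun x y x' y' _ hy hx' _ hxx' hyy' => apply_eq_of_mul_eq hfrob ?_,
    fun x y _ _ => apply_eq_of_mul_eq hfrob (mul_left_comm x y _),
    fun x _ hx => mem_nilFiltration_of_pairing_eq_zero hfrob hnondeg hx,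
    fun a x y _ _ => apply_eq_of_mul_eq hfrob (by ring)⟩
  linear_combination mul_mul_pow_eq_zero_of_mem_nilFiltration hxx' hy +
    mul_mul_pow_eq_zero_of_mem_nilFiltration hyy' hx'

/-- nilpotent construction.  For a Frobenius algebra `(A, B)` and a
nilpotent `n` of order `d`, with `J_j = Ker (· * n^j)`, `I_j = (n) + J_j`
(so that `I_{k-1}` is uniformly `(n) ⊔ J_{k-1}`, with `J_0 = 0`), the pairing
`(x,y)_k := B x̃ (ỹ * n^(k-1))` on `I_k/I_{k-1}` (via representatives in `J_k`)
is well-defined, symmetric, nondegenerate, and satisfies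
`(a∘x, y)_k = (x, a∘y)_k`. -/
theorem stmt2 {A : Type*} [CommRing A] [Algebra ℂ A] [FiniteDimensional ℂ A]
    (B : A →ₗ[ℂ] A →ₗ[ℂ] ℂ)
    (hsymm : ∀ x y : A, B x y = B y x)
    (hnondeg : ∀ x : A, (∀ y : A, B x y = 0) → x = 0)
    (hfrob : ∀ x y z : A, B (x * y) z = B x (y * z))
    (n : A) (d : ℕ) (hd : 1 ≤ d) (hnd : n ^ d = 0) (hne : n ^ (d - 1) ≠ 0)
    (k : ℕ) (hk1 : 1 ≤ k) (hkd : k ≤ d) :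
    let J : ℕ → Submodule ℂ A := fun j => LinearMap.ker (LinearMap.mulRight ℂ (n ^ j))
    let I : ℕ → Submodule ℂ A := fun j => LinearMap.range (LinearMap.mulRight ℂ n) ⊔ J j
    -- every element of I_k has a representative in J_k modulo I_{k-1}
    (∀ x ∈ I k, ∃ x' ∈ J k, x - x' ∈ I (k - 1)) ∧
    -- well-definedness
    (∀ x y x' y' : A, x ∈ J k → y ∈ J k → x' ∈ J k → y' ∈ J k →
      x - x' ∈ I (k - 1) → y - y' ∈ I (k - 1) →
      B x (y * n ^ (k - 1)) = B x' (y' * n ^ (k - 1))) ∧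
    -- symmetry
    (∀ x y : A, x ∈ J k → y ∈ J k →
      B x (y * n ^ (k - 1)) = B y (x * n ^ (k - 1))) ∧
    -- nondegeneracy on the graded quotient
    (∀ x ∈ J k, (∀ y ∈ J k, B x (y * n ^ (k - 1)) = 0) → x ∈ I (k - 1)) ∧
    -- compatibility with the A/I_{k-1}-module structure (Frobenius property)
    (∀ a x y : A, x ∈ J k → y ∈ J k →
      B (a * x) (y * n ^ (k - 1)) = B x ((a * y) * n ^ (k - 1))) :=
  stmt2_general B hnondeg hfrob n k hk1
end

section
/- Let A = ℂ[H, E₁, E₂]/(H² − E₂², H·E₁, E₁² − 2H·E₂) with bilinear form determined by ⟨H^i, H^j⟩ = (1/8)δ_{i+j,3} together with the algebra relations and the Frobenius property. Then n := 4H is nilpotent of order 4 in A, and the filtration from the nilpotent construction is I_0 = (H) ⊂ I_1 = (H, E₁) ⊂ I_2 = I_3 = (H, E₁, E₂) ⊂ I_4 = A, with pairings (H^i, H^j)_0 = (1/32)δ_{i+j,4}, (E₁, E₁E₂)_1 = 1/4, (E₂, E₂)_2 = 1/2, and (1,1)_4 = 8. -/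
/-!
Since `n = 4H`, everything reduces to multiplication by powers of `H`. The relations give
`2 H²E₂ = H E₁² = 0`, hence `H²E₂ = 0` and `H⁴ = H²E₂² = 0`. On the monomial basis,
multiplication by `H` (resp. `H³`) sends every basis vector either to `0` or to another basis
vector, injectively, so its kernel is spanned by the basis vectors it kills; all of these lie in
`(H, E₁)` (resp. `(H, E₁, E₂)`). The pairings follow by moving factors across the Frobenius form
until only `⟨H^i, H^j⟩` remains.
-/

namespace Module.Basis

variable {R ι κ M N : Type*} [Semiring R] [AddCommMonoid M] [Module R M] [AddCommMonoid N]
  [Module R N]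

theorem ker_eq_span_image_compl (b : Basis ι R M) (c : Basis κ R N) {f : M →ₗ[R] N}
    {s : Set ι} {σ : ι → κ} (hσ : Set.InjOn σ s) (hf : ∀ i ∈ s, f (b i) = c (σ i))
    (hz : ∀ i ∉ s, f (b i) = 0) :
    LinearMap.ker f = Submodule.span R (b '' sᶜ) := by
  classical
  refine le_antisymm (fun x hx => ?_) (Submodule.span_le.mpr ?_)
  · have hcoord (j : ι) (hj : j ∈ s) : c.coord (σ j) ∘ₗ f = b.coord j := by
      refine b.ext fun i => ?_
      by_cases hi : i ∈ s
      · simp only [LinearMap.comp_apply, hf i hi, coord_apply, repr_self, Finsupp.single_apply,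
          hσ.eq_iff hi hj]
      · simp [hz i hi, Finsupp.single_eq_of_ne (ne_of_mem_of_not_mem hj hi)]
    rw [b.mem_span_image]
    intro j hj hjs
    refine Finsupp.mem_support_iff.mp hj ?_
    rw [← b.coord_apply, ← hcoord j hjs, LinearMap.comp_apply, LinearMap.mem_ker.mp hx,
      map_zero]
  · rintro _ ⟨i, hi, rfl⟩
    exact hz i hi

end Module.Basis

namespace LinearMap

section CommSemiring

variable {R A : Type*} [CommSemiring R] [CommSemiring A] [Algebra R A] {a b x : A}

theorem mulRight_smul (c : R) (a : A) : mulRight R (c • a) = c • mulRight R a := by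
  ext
  simp

theorem mem_range_mulRight_of_dvd (h : a ∣ x) : x ∈ range (mulRight R a) := by
  obtain ⟨c, rfl⟩ := h
  exact ⟨c, mul_comm c a⟩

theorem ker_mulRight_le_of_dvd (h : a ∣ b) : ker (mulRight R a) ≤ ker (mulRight R b) := by
  obtain ⟨c, rfl⟩ := h
  intro x hx
  rw [mem_ker, mulRight_apply] at hx ⊢
  rw [← mul_assoc, hx, zero_mul]

theorem range_mulRight_le_ker_mulRight (h : a * b = 0) :
    range (mulRight R a) ≤ ker (mulRight R b) := by
  rintro _ ⟨y, rfl⟩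
  simp [mul_assoc, h]

end CommSemiring

variable {K A : Type*} [Field K] [CommRing A] [Algebra K A] {c : K}

theorem range_mulRight_smul (hc : c ≠ 0) (a : A) :
    range (mulRight K (c • a)) = range (mulRight K a) := by
  rw [mulRight_smul, range_smul _ _ hc]

theorem ker_mulRight_smul (hc : c ≠ 0) (a : A) :
    ker (mulRight K (c • a)) = ker (mulRight K a) := by
  rw [mulRight_smul, ker_smul _ _ hc]

end LinearMap

namespace OrbifoldCohomologyP1124

open LinearMap

variable {R A : Type*} [CommRing R] [CommRing A] [Algebra R A] {H E₁ E₂ : A}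

theorem sq_mul_eq_zero [IsAddTorsionFree A] (hrel2 : H * E₁ = 0)
    (hrel3 : E₁ ^ 2 = 2 * (H * E₂)) : H ^ 2 * E₂ = 0 := by
  rw [← two_nsmul_eq_zero]
  linear_combination E₁ * hrel2 - H * hrel3

theorem pow_four_eq_zero (hrel1 : H ^ 2 = E₂ ^ 2) (hH2E₂ : H ^ 2 * E₂ = 0) : H ^ 4 = 0 := by
  linear_combination H ^ 2 * hrel1 + E₂ * hH2E₂

theorem ker_mulRight_le (b : Module.Basis (Fin 8) R A)
    (hb : ⇑b = ![1, H, E₁, E₂, H ^ 2, H * E₂, E₁ * E₂, H ^ 3])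
    (hHE₁ : H * E₁ = 0) (hH2E₂ : H ^ 2 * E₂ = 0) (hH4 : H ^ 4 = 0) :
    ker (mulRight R H) ≤ range (mulRight R H) ⊔ range (mulRight R E₁) := by
  -- `1, H, E₂, H²` are sent to `H, H², H E₂, H³`, i.e. `b i ↦ b (σ i)`; the rest to `0`
  rw [b.ker_eq_span_image_compl b (s := {0, 1, 3, 4}) (σ := ![1, 4, 0, 5, 7, 0, 0, 0])
    (by simp only [Set.InjOn, Set.mem_insert_iff, Set.mem_singleton_iff]; decide) ?_ ?_,
    Submodule.span_le]
  · rintro _ ⟨i, hi, rfl⟩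
    fin_cases i <;> simp at hi <;> simp only [hb, Fin.reduceFinMk, Matrix.cons_val]
    all_goals first
      | (refine Submodule.mem_sup_left (mem_range_mulRight_of_dvd ?_); · simp)
      | (refine Submodule.mem_sup_right (mem_range_mulRight_of_dvd ?_); · simp)
  · intro i hi
    fin_cases i <;> simp at hi <;>
      simp only [hb, mulRight_apply, Fin.reduceFinMk, Matrix.cons_val] <;> ring
  · intro i hi
    fin_cases i <;> simp at hi <;>
      simp only [hb, mulRight_apply, Fin.reduceFinMk, Matrix.cons_val] <;> grind

theorem ker_mulRight_pow_three_le (b : Module.Basis (Fin 8) R A)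
    (hb : ⇑b = ![1, H, E₁, E₂, H ^ 2, H * E₂, E₁ * E₂, H ^ 3])
    (hHE₁ : H * E₁ = 0) (hH2E₂ : H ^ 2 * E₂ = 0) (hH4 : H ^ 4 = 0) :
    ker (mulRight R (H ^ 3)) ≤
      range (mulRight R H) ⊔ range (mulRight R E₁) ⊔ range (mulRight R E₂) := by
  rw [b.ker_eq_span_image_compl b (s := {0}) (σ := fun _ => 7) (Set.injOn_singleton _ _) ?_ ?_,
    Submodule.span_le]
  · rintro _ ⟨i, hi, rfl⟩
    fin_cases i <;> simp at hi <;> simp only [hb, Fin.reduceFinMk, Matrix.cons_val]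
    all_goals first
      | (refine Submodule.mem_sup_left <| Submodule.mem_sup_left <|
          mem_range_mulRight_of_dvd ?_; · simp)
      | (refine Submodule.mem_sup_left <| Submodule.mem_sup_right <|
          mem_range_mulRight_of_dvd ?_; · simp)
      | (refine Submodule.mem_sup_right <| mem_range_mulRight_of_dvd ?_; · simp)
  · rintro i rfl
    simp [hb]
  · intro i hi
    fin_cases i <;> simp at hi <;>
      simp only [hb, mulRight_apply, Fin.reduceFinMk, Matrix.cons_val] <;> grind

theorem range_sup_ker_mulRight (b : Module.Basis (Fin 8) R A)
    (hb : ⇑b = ![1, H, E₁, E₂, H ^ 2, H * E₂, E₁ * E₂, H ^ 3])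
    (hHE₁ : H * E₁ = 0) (hH2E₂ : H ^ 2 * E₂ = 0) (hH4 : H ^ 4 = 0) :
    range (mulRight R H) ⊔ ker (mulRight R H) =
      range (mulRight R H) ⊔ range (mulRight R E₁) :=
  le_antisymm (sup_le le_sup_left (ker_mulRight_le b hb hHE₁ hH2E₂ hH4))
    (sup_le_sup_left (range_mulRight_le_ker_mulRight (by rw [mul_comm, hHE₁])) _)

theorem range_sup_ker_mulRight_pow (b : Module.Basis (Fin 8) R A)
    (hb : ⇑b = ![1, H, E₁, E₂, H ^ 2, H * E₂, E₁ * E₂, H ^ 3])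
    (hHE₁ : H * E₁ = 0) (hH2E₂ : H ^ 2 * E₂ = 0) (hH4 : H ^ 4 = 0) {k : ℕ} (hk2 : 2 ≤ k)
    (hk3 : k ≤ 3) :
    range (mulRight R H) ⊔ ker (mulRight R (H ^ k)) =
      range (mulRight R H) ⊔ range (mulRight R E₁) ⊔ range (mulRight R E₂) := by
  have hE₁ : range (mulRight R E₁) ≤ ker (mulRight R (H ^ k)) :=
    (range_mulRight_le_ker_mulRight (by rw [mul_comm, hHE₁])).trans
      (ker_mulRight_le_of_dvd (dvd_pow_self H (by omega)))
  have hE₂ : range (mulRight R E₂) ≤ ker (mulRight R (H ^ k)) :=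
    (range_mulRight_le_ker_mulRight (by rw [mul_comm, hH2E₂])).trans
      (ker_mulRight_le_of_dvd (pow_dvd_pow H hk2))
  refine le_antisymm (sup_le (le_sup_left.trans le_sup_left) ?_)
    (sup_le (sup_le le_sup_left (hE₁.trans le_sup_right)) (hE₂.trans le_sup_right))
  exact (ker_mulRight_le_of_dvd (pow_dvd_pow H hk3)).trans
    (ker_mulRight_pow_three_le b hb hHE₁ hH2E₂ hH4)

theorem pairing_E₁_E₁_mul_E₂ {B : A →ₗ[R] A →ₗ[R] R}
    (hfrob : ∀ x y z : A, B (x * y) z = B x (y * z)) (hrel1 : H ^ 2 = E₂ ^ 2)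
    (hrel3 : E₁ ^ 2 = 2 * (H * E₂)) : B E₁ (E₁ * E₂) = 2 * B H (H ^ 2) :=
  calc B E₁ (E₁ * E₂) = B (H * (E₂ + E₂)) E₂ := by
        rw [← hfrob]; congr 2; linear_combination hrel3
    _ = B H (H ^ 2 + H ^ 2) := by rw [hfrob]; congr 1; linear_combination -2 * hrel1
    _ = 2 * B H (H ^ 2) := by rw [map_add, two_mul]

theorem pairing_E₂_E₂_mul_H {B : A →ₗ[R] A →ₗ[R] R}
    (hfrob : ∀ x y z : A, B (x * y) z = B x (y * z)) (hrel1 : H ^ 2 = E₂ ^ 2) :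
    B E₂ (E₂ * H) = B (H ^ 2) H := by
  rw [← hfrob, ← sq, ← hrel1]

end OrbifoldCohomologyP1124

open LinearMap OrbifoldCohomologyP1124 in
theorem stmt6_general {A : Type*} [CommRing A] [Algebra ℂ A]
    (H E₁ E₂ : A)
    (hrel1 : H ^ 2 = E₂ ^ 2) (hrel2 : H * E₁ = 0) (hrel3 : E₁ ^ 2 = 2 * (H * E₂))
    (bA : Module.Basis (Fin 8) ℂ A)
    (hbA : bA 0 = 1 ∧ bA 1 = H ∧ bA 2 = E₁ ∧ bA 3 = E₂ ∧ bA 4 = H ^ 2 ∧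
      bA 5 = H * E₂ ∧ bA 6 = E₁ * E₂ ∧ bA 7 = H ^ 3)
    (B : A →ₗ[ℂ] A →ₗ[ℂ] ℂ)
    (hfrob : ∀ x y z : A, B (x * y) z = B x (y * z))
    (hBH : ∀ i j : ℕ, i ≤ 3 → j ≤ 3 →
      B (H ^ i) (H ^ j) = if i + j = 3 then 1 / 8 else 0) :
    let n : A := (4 : ℂ) • H
    -- n = 4H is nilpotent of order 4
    (n ^ 4 = 0 ∧ n ^ 3 ≠ 0) ∧
    -- the filtration I_0 = (H) ⊂ I_1 = (H,E₁) ⊂ I_2 = I_3 = (H,E₁,E₂) ⊂ I_4 = A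
    (LinearMap.range (LinearMap.mulRight ℂ n)
      = LinearMap.range (LinearMap.mulRight ℂ H)) ∧
    (LinearMap.range (LinearMap.mulRight ℂ n) ⊔
        LinearMap.ker (LinearMap.mulRight ℂ n)
      = LinearMap.range (LinearMap.mulRight ℂ H) ⊔
          LinearMap.range (LinearMap.mulRight ℂ E₁)) ∧
    (∀ k : ℕ, k = 2 ∨ k = 3 →
      LinearMap.range (LinearMap.mulRight ℂ n) ⊔
          LinearMap.ker (LinearMap.mulRight ℂ (n ^ k))
        = LinearMap.range (LinearMap.mulRight ℂ H) ⊔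
            LinearMap.range (LinearMap.mulRight ℂ E₁) ⊔
            LinearMap.range (LinearMap.mulRight ℂ E₂)) ∧
    (LinearMap.range (LinearMap.mulRight ℂ n) ⊔
        LinearMap.ker (LinearMap.mulRight ℂ (n ^ 4)) = ⊤) ∧
    -- the pairings
    (∀ i j : ℕ, 1 ≤ i → i ≤ 3 → 1 ≤ j → j ≤ 3 →
      (1 / 4 : ℂ) * B (H ^ (i - 1)) (H ^ j)
        = if i + j = 4 then 1 / 32 else 0) ∧
    (B E₁ (E₁ * E₂) = 1 / 4) ∧
    (B E₂ (E₂ * n) = 1 / 2) ∧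
    (B 1 (n ^ 3) = 8) := by
  intro n
  obtain ⟨hb0, hb1, hb2, hb3, hb4, hb5, hb6, hb7⟩ := hbA
  have hb : ⇑bA = ![1, H, E₁, E₂, H ^ 2, H * E₂, E₁ * E₂, H ^ 3] := by
    ext i
    fin_cases i <;> assumption
  have : IsAddTorsionFree A := .of_isTorsionFree ℂ A
  have hH2E₂ := sq_mul_eq_zero hrel2 hrel3
  have hH4 := pow_four_eq_zero hrel1 hH2E₂
  have h4 : (4 : ℂ) ≠ 0 := by norm_num
  have hrange : range (mulRight ℂ n) = range (mulRight ℂ H) := range_mulRight_smul h4 H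
  have hker (k : ℕ) : ker (mulRight ℂ (n ^ k)) = ker (mulRight ℂ (H ^ k)) := by
    rw [smul_pow]
    exact ker_mulRight_smul (pow_ne_zero k h4) _
  have hB3 : B 1 (n ^ 3) = 8 := by
    rw [smul_pow, map_smul, ← pow_zero H, hBH 0 3 (Nat.zero_le 3) le_rfl]
    norm_num
  refine ⟨⟨by rw [smul_pow, hH4, smul_zero], fun h => by norm_num [h] at hB3⟩, hrange,
    ?_, ?_, ?_, ?_, ?_, ?_, hB3⟩
  · rw [hrange, ← pow_one n, hker, pow_one]
    exact range_sup_ker_mulRight bA hb hrel2 hH2E₂ hH4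
  · rintro k (rfl | rfl) <;> rw [hrange, hker] <;>
      exact range_sup_ker_mulRight_pow bA hb hrel2 hH2E₂ hH4 (by norm_num) (by norm_num)
  · rw [hker, hH4, mulRight_zero_eq_zero, ker_zero, sup_top_eq]
  · intro i j hi1 hi3 hj1 hj3
    rw [hBH (i - 1) j (by omega) hj3]
    split_ifs <;> first | omega | norm_num
  · have hB12 : B H (H ^ 2) = 1 / 8 := by simpa using hBH 1 2 (by norm_num) (by norm_num)
    rw [pairing_E₁_E₁_mul_E₂ hfrob hrel1 hrel3, hB12]
    norm_num
  · have hB21 : B (H ^ 2) H = 1 / 8 := by simpa using hBH 2 1 (by norm_num) (by norm_num)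
    rw [mul_smul_comm, map_smul, pairing_E₂_E₂_mul_H hfrob hrel1, hB21]
    norm_num

/-- the Chen–Ruan orbifold cohomology
`A = ℂ[H,E₁,E₂]/(H² − E₂², H·E₁, E₁² − 2H·E₂)` of `ℙ(1,1,2,4)` (with its basis
`1, H, E₁, E₂, H², H·E₂, E₁·E₂, H³`) and the Frobenius form determined by
`⟨H^i,H^j⟩ = (1/8)δ_{i+j,3}`: the element `n = 4H` is nilpotent of order `4`, and
the filtration from the nilpotent construction is
`I_0 = (H) ⊂ I_1 = (H,E₁) ⊂ I_2 = I_3 = (H,E₁,E₂) ⊂ I_4 = A`, with pairings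
`(H^i,H^j)_0 = (1/32)δ_{i+j,4}`, `(E₁,E₁E₂)_1 = 1/4`, `(E₂,E₂)_2 = 1/2`,
`(1,1)_4 = 8`. -/
theorem stmt6 {A : Type*} [CommRing A] [Algebra ℂ A]
    (H E₁ E₂ : A)
    (hrel1 : H ^ 2 = E₂ ^ 2) (hrel2 : H * E₁ = 0) (hrel3 : E₁ ^ 2 = 2 * (H * E₂))
    (bA : Module.Basis (Fin 8) ℂ A)
    (hbA : bA 0 = 1 ∧ bA 1 = H ∧ bA 2 = E₁ ∧ bA 3 = E₂ ∧ bA 4 = H ^ 2 ∧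
      bA 5 = H * E₂ ∧ bA 6 = E₁ * E₂ ∧ bA 7 = H ^ 3)
    (B : A →ₗ[ℂ] A →ₗ[ℂ] ℂ)
    (hsymm : ∀ x y : A, B x y = B y x)
    (hnondeg : ∀ x : A, (∀ y : A, B x y = 0) → x = 0)
    (hfrob : ∀ x y z : A, B (x * y) z = B x (y * z))
    (hBH : ∀ i j : ℕ, i ≤ 3 → j ≤ 3 →
      B (H ^ i) (H ^ j) = if i + j = 3 then 1 / 8 else 0) :
    let n : A := (4 : ℂ) • H
    -- n = 4H is nilpotent of order 4
    (n ^ 4 = 0 ∧ n ^ 3 ≠ 0) ∧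
    -- the filtration I_0 = (H) ⊂ I_1 = (H,E₁) ⊂ I_2 = I_3 = (H,E₁,E₂) ⊂ I_4 = A
    (LinearMap.range (LinearMap.mulRight ℂ n)
      = LinearMap.range (LinearMap.mulRight ℂ H)) ∧
    (LinearMap.range (LinearMap.mulRight ℂ n) ⊔
        LinearMap.ker (LinearMap.mulRight ℂ n)
      = LinearMap.range (LinearMap.mulRight ℂ H) ⊔
          LinearMap.range (LinearMap.mulRight ℂ E₁)) ∧
    (∀ k : ℕ, k = 2 ∨ k = 3 →
      LinearMap.range (LinearMap.mulRight ℂ n) ⊔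
          LinearMap.ker (LinearMap.mulRight ℂ (n ^ k))
        = LinearMap.range (LinearMap.mulRight ℂ H) ⊔
            LinearMap.range (LinearMap.mulRight ℂ E₁) ⊔
            LinearMap.range (LinearMap.mulRight ℂ E₂)) ∧
    (LinearMap.range (LinearMap.mulRight ℂ n) ⊔
        LinearMap.ker (LinearMap.mulRight ℂ (n ^ 4)) = ⊤) ∧
    -- the pairings
    (∀ i j : ℕ, 1 ≤ i → i ≤ 3 → 1 ≤ j → j ≤ 3 →
      (1 / 4 : ℂ) * B (H ^ (i - 1)) (H ^ j)
        = if i + j = 4 then 1 / 32 else 0) ∧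
    (B E₁ (E₁ * E₂) = 1 / 4) ∧
    (B E₂ (E₂ * n) = 1 / 2) ∧
    (B 1 (n ^ 3) = 8) :=
  stmt6_general H E₁ E₂ hrel1 hrel2 hrel3 bA hbA B hfrob hBH
end

section
/- Let X be a smooth complex projective surface (or compact Kähler surface) and n ∈ H²(X, ℝ) a class with n² ≠ 0 in H⁴(X,ℝ), and assume hard Lefschetz for n, so that H²(X,ℂ) = H²_prim(X,ℂ) ⊕ ℂn where H²_prim = Ker(n∪ : H² → H⁴). Then the Frobenius filtration on A = H^even(X,ℂ) defined by n via the nilpotent construction is I_0 = ℂn ⊕ ℂn², I_1 = I_2 = I_0 ⊕ H²_prim(X,ℂ), I_3 = I_1 ⊕ ℂ·1, with pairings (n, n²)_0 = K, (n,n)_0 = (n²,n²)_0 = 0, (x,y)_1 = ∫_X x∪y for x,y ∈ H²_prim, and (1,1)_3 = K, where K = ∫_X n². -/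
/-- Example `example-surface`: for the even cohomology
`A = H⁰ ⊕ H² ⊕ H⁴` of a compact Kähler (projective) surface (encoded abstractly
by graded pieces, the intersection functional `intg` and a class `n ∈ H²` with
`∫ n² = K ≠ 0`, hard Lefschetz decomposition `H² = H²_prim ⊕ ℂn`), the Frobenius
filtration of the nilpotent construction is `I_0 = ℂn ⊕ ℂn²`,
`I_1 = I_2 = I_0 ⊕ H²_prim`, `I_3 = I_1 ⊕ ℂ·1`, with pairings `(n,n²)_0 = K`,
`(n,n)_0 = (n²,n²)_0 = 0`, `(x,y)_1 = ∫ x∪y` on `H²_prim`, `(1,1)_3 = K`. -/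
theorem stmt8 {A : Type*} [CommRing A] [Algebra ℂ A] [FiniteDimensional ℂ A]
    (H0 H2 H4 : Submodule ℂ A)
    (hsum : H0 ⊔ H2 ⊔ H4 = ⊤)
    (hindep : ∀ a ∈ H0, ∀ x ∈ H2, ∀ y ∈ H4, a + x + y = 0 → a = 0 ∧ x = 0 ∧ y = 0)
    (hH0 : H0 = Submodule.span ℂ {(1 : A)})
    (hmul22 : ∀ x ∈ H2, ∀ y ∈ H2, x * y ∈ H4)
    (hmul24 : ∀ x ∈ H2, ∀ y ∈ H4, x * y = 0)
    (hmul44 : ∀ x ∈ H4, ∀ y ∈ H4, x * y = 0)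
    (intg : A →ₗ[ℂ] ℂ)
    (hint0 : ∀ x ∈ H0 ⊔ H2, intg x = 0)
    (hnondeg : ∀ x : A, (∀ y : A, intg (x * y) = 0) → x = 0)
    (n : A) (hn : n ∈ H2) (K : ℂ) (hK : intg (n * n) = K) (hKne : K ≠ 0)
    (hH4 : H4 = Submodule.span ℂ {n * n})
    -- hard Lefschetz: H² = H²_prim ⊕ ℂ n
    (hlef : H2 = (H2 ⊓ LinearMap.ker (LinearMap.mulRight ℂ n)) ⊔
      Submodule.span ℂ {n}) :
    let prim : Submodule ℂ A := H2 ⊓ LinearMap.ker (LinearMap.mulRight ℂ n)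
    -- the filtration
    (LinearMap.range (LinearMap.mulRight ℂ n) = Submodule.span ℂ {n, n * n}) ∧
    (LinearMap.range (LinearMap.mulRight ℂ n) ⊔
        LinearMap.ker (LinearMap.mulRight ℂ n)
      = Submodule.span ℂ {n, n * n} ⊔ prim) ∧
    (LinearMap.range (LinearMap.mulRight ℂ n) ⊔
        LinearMap.ker (LinearMap.mulRight ℂ (n ^ 2))
      = Submodule.span ℂ {n, n * n} ⊔ prim) ∧
    (LinearMap.range (LinearMap.mulRight ℂ n) ⊔
        LinearMap.ker (LinearMap.mulRight ℂ (n ^ 3))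
      = (Submodule.span ℂ {n, n * n} ⊔ prim) ⊔ Submodule.span ℂ {(1 : A)}) ∧
    ((Submodule.span ℂ {n, n * n} ⊔ prim) ⊔ Submodule.span ℂ {(1 : A)} = ⊤) ∧
    -- the pairings (via representatives: n = n·1, n² = n·n, 1 ∈ J₃)
    (intg ((1 : A) * (n * n)) = K) ∧     -- (n, n²)₀ = K
    (intg ((1 : A) * (n * 1)) = 0) ∧     -- (n, n)₀ = 0
    (intg (n * (n * n)) = 0) ∧           -- (n², n²)₀ = 0
    (∀ x ∈ prim, ∀ y ∈ prim,
      intg (x * (y * n ^ 0)) = intg (x * y)) ∧  -- (x,y)₁ = ∫ x∪y on H²_prim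
    (intg ((1 : A) * (1 * n ^ 2)) = K) := by    -- (1,1)₃ = K

  intro prim
  -- basic facts
  have hnnH4 : n * n ∈ H4 := hmul22 n hn n hn
  have hnn0 : n * (n * n) = 0 := hmul24 n hn (n * n) hnnH4
  have hnnne : n * n ≠ 0 := fun h => hKne (by rw [← hK, h, map_zero])
  have hnne : n ≠ 0 := fun h => hnnne (by rw [h, mul_zero])
  -- decomposition of arbitrary elements
  have hdec : ∀ a : A, ∃ c : ℂ, ∃ x : A, ∃ d : ℂ,
      x ∈ H2 ∧ a = c • (1 : A) + x + d • (n * n) := by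
    intro a
    have ha : a ∈ H0 ⊔ H2 ⊔ H4 := by rw [hsum]; trivial
    obtain ⟨b, hb, y, hy, hab⟩ := Submodule.mem_sup.mp ha
    obtain ⟨h0, hh0, x, hx, hbx⟩ := Submodule.mem_sup.mp hb
    rw [hH0, Submodule.mem_span_singleton] at hh0
    obtain ⟨c, hc⟩ := hh0
    rw [hH4, Submodule.mem_span_singleton] at hy
    obtain ⟨d, hd⟩ := hy
    exact ⟨c, x, d, hx, by rw [← hab, ← hbx, ← hc, ← hd]⟩
  -- H2 multiples of n land in span of n*n
  have hH2n : ∀ x ∈ H2, ∃ e : ℂ, x * n = e • (n * n) := by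
    intro x hx
    have : x * n ∈ H4 := hmul22 x hx n hn
    rw [hH4, Submodule.mem_span_singleton] at this
    obtain ⟨e, he⟩ := this
    exact ⟨e, he.symm⟩
  -- range of mulRight n = span {n, n*n}
  have hrange : LinearMap.range (LinearMap.mulRight ℂ n) = Submodule.span ℂ {n, n * n} := by
    apply le_antisymm
    · rintro _ ⟨a, rfl⟩
      obtain ⟨c, x, d, hx, rfl⟩ := hdec a
      obtain ⟨e, he⟩ := hH2n x hx
      have : LinearMap.mulRight ℂ n (c • (1 : A) + x + d • (n * n))
          = c • n + e • (n * n) := by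
        simp only [LinearMap.mulRight_apply]
        rw [add_mul, add_mul, smul_mul_assoc, one_mul, he, smul_mul_assoc,
          mul_comm (n * n) n, hnn0, smul_zero, add_zero]
      rw [this]
      exact Submodule.mem_span_pair.mpr ⟨c, e, rfl⟩
    · rw [Submodule.span_le]
      rintro z hz
      rcases hz with rfl | hz
      · exact ⟨1, by simp⟩
      · rcases hz with rfl
        exact ⟨n, by simp⟩
  -- prim is inside ker(mulRight n)
  have hprimker : prim ≤ LinearMap.ker (LinearMap.mulRight ℂ n) := inf_le_right
  have hprimH2 : prim ≤ H2 := inf_le_left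
  -- ker(mulRight n) ≤ prim ⊔ span {n*n}
  have hker1 : LinearMap.ker (LinearMap.mulRight ℂ n) ≤ prim ⊔ Submodule.span ℂ {n * n} := by
    intro a ha
    rw [LinearMap.mem_ker, LinearMap.mulRight_apply] at ha
    obtain ⟨c, x, d, hx, rfl⟩ := hdec a
    obtain ⟨e, he⟩ := hH2n x hx
    have heq : (0 : A) + c • n + e • (n * n) = 0 := by
      rw [zero_add, ← he]
      calc c • n + x * n = (c • (1:A) + x + d • (n * n)) * n := by
            rw [add_mul, add_mul, smul_mul_assoc, one_mul, smul_mul_assoc,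
              mul_comm (n * n) n, hnn0, smul_zero, add_zero]
        _ = 0 := ha
    obtain ⟨-, hcn, hen⟩ := hindep 0 (zero_mem _) (c • n) (Submodule.smul_mem _ _ hn)
      (e • (n * n)) (Submodule.smul_mem _ _ hnnH4) heq
    have hc : c = 0 := by
      rcases smul_eq_zero.mp hcn with h | h
      · exact h
      · exact absurd h hnne
    have hxn : x * n = 0 := by rw [he, hen]
    have hxprim : x ∈ prim := Submodule.mem_inf.mpr
      ⟨hx, by simp [LinearMap.mem_ker, LinearMap.mulRight_apply, hxn]⟩
    rw [hc, zero_smul, zero_add]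
    exact Submodule.add_mem_sup hxprim (Submodule.smul_mem _ _ (Submodule.mem_span_singleton_self _))
  have hspan_nn_le : Submodule.span ℂ {n * n} ≤ Submodule.span ℂ {n, n * n} := by
    apply Submodule.span_mono; intro z hz; rcases hz with rfl; exact Set.mem_insert_of_mem _ rfl
  have hn3 : n ^ 3 = 0 := by
    rw [pow_succ, sq, mul_comm (n * n) n]; exact hnn0
  have htop : (Submodule.span ℂ {n, n * n} ⊔ prim) ⊔ Submodule.span ℂ {(1 : A)} = ⊤ := by
    rw [eq_top_iff, ← hsum]
    apply sup_le (sup_le ?_ ?_) ?_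
    · rw [hH0]; exact le_sup_right
    · rw [hlef]
      apply sup_le
      · exact le_trans le_sup_right le_sup_left
      · refine le_trans ?_ (le_trans le_sup_left le_sup_left)
        apply Submodule.span_mono
        intro z hz; rcases hz with rfl; exact Set.mem_insert _ _
    · rw [hH4]
      exact le_trans hspan_nn_le (le_trans le_sup_left le_sup_left)
  -- first filtration statement
  refine ⟨hrange, ?_, ?_, ?_, htop, ?_, ?_, ?_, ?_, ?_⟩
  · apply le_antisymm
    · apply sup_le
      · rw [hrange]; exact le_sup_left
      · exact le_trans hker1 (sup_le (le_sup_right)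
          (le_trans hspan_nn_le le_sup_left))
    · apply sup_le
      · rw [hrange]; exact le_sup_left
      · exact le_trans hprimker le_sup_right
  · -- I_2
    apply le_antisymm
    · apply sup_le
      · rw [hrange]; exact le_sup_left
      · intro a ha
        rw [LinearMap.mem_ker, LinearMap.mulRight_apply] at ha
        obtain ⟨c, x, d, hx, rfl⟩ := hdec a
        have hxn2 : x * n ^ 2 = 0 := by rw [sq]; exact hmul24 x hx (n * n) hnnH4
        have hnn2 : (n * n) * n ^ 2 = 0 := by rw [sq]; exact hmul44 (n*n) hnnH4 (n*n) hnnH4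
        have hc : c = 0 := by
          have : c • (n * n) = 0 := by
            calc c • (n * n) = (c • (1:A) + x + d • (n * n)) * n ^ 2 := by
                  rw [add_mul, add_mul, smul_mul_assoc, one_mul, hxn2, add_zero,
                    smul_mul_assoc, hnn2, smul_zero, add_zero, sq]
              _ = 0 := ha
          rcases smul_eq_zero.mp this with h | h
          · exact h
          · exact absurd h hnnne
        rw [hc, zero_smul, zero_add]
        have hx2 : x ∈ prim ⊔ Submodule.span ℂ {n} := by rw [← hlef]; exact hx
        obtain ⟨p, hp, q, hq, rfl⟩ := Submodule.mem_sup.mp hx2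
        refine Submodule.add_mem _ (Submodule.add_mem _ ?_ ?_) ?_
        · exact Submodule.mem_sup_right hp
        · exact Submodule.mem_sup_left (Submodule.span_mono
            (by intro w hw; rcases hw with rfl; exact Set.mem_insert _ _) hq)
        · exact Submodule.mem_sup_left (hspan_nn_le
            (Submodule.smul_mem _ _ (Submodule.mem_span_singleton_self _)))
    · apply sup_le
      · rw [← hrange]; exact le_sup_left
      · intro x hx
        apply Submodule.mem_sup_right
        rw [LinearMap.mem_ker, LinearMap.mulRight_apply, sq]
        exact hmul24 x (hprimH2 hx) (n * n) hnnH4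
  · -- I_3
    rw [htop, eq_top_iff]
    intro a _
    apply Submodule.mem_sup_right
    rw [LinearMap.mem_ker, LinearMap.mulRight_apply, hn3, mul_zero]
  · rw [one_mul, hK]
  · rw [one_mul, mul_one]
    exact hint0 n (Submodule.mem_sup_right hn)
  · rw [hnn0, map_zero]
  · intro x _ y _; rw [pow_zero, mul_one]
  · rw [one_mul, one_mul, sq, hK]
end

section
/- Let X be a compact Kähler surface, n ∈ H²(X,ℝ) a Kähler class with K = ∫_X n² > 0, and c = √−1. Set A_ℝ = {x ∪ e^{cn} : x ∈ H^even(X,ℝ)} ⊂ H^even(X,ℂ), with increasing filtration 𝒲₁ = ℝ(n + cn²) ⊕ ℝn², 𝒲₂ = 𝒲₃ = 𝒲₁ ⊕ H²_prim(X,ℝ), 𝒲₄ = A_ℝ, and decreasing filtration ℱ² = H⁰(X,ℂ), ℱ¹ = H⁰ ⊕ H², ℱ⁰ = A on A = A_ℝ ⊗ ℂ. Then (𝒲_•, ℱ^•) is an ℝ-mixed Hodge structure on A_ℝ, i.e. ℱ^• induces a pure ℝ-Hodge structure of weight k on each graded piece Gr_k^𝒲 A_ℝ. -/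
/-!
Since `n ^ 3 = 0`, `e^{cn} = 1 + c n - n²/2` is a polynomial with inverse `e^{-cn}`, and the
complex conjugation of `A` with respect to the real form `A_ℝ = H^even(X,ℝ) · e^{cn}` is the
antilinear involution `σ y = ȳ · e^{2cn}`. Complexified, `𝒲₀ ⊂ 𝒲₁ ⊂ 𝒲₂ = 𝒲₃ ⊂ 𝒲₄` becomes
`0 ⊂ ⟨n, n²⟩ ⊂ H² ⊕ H⁴ = H² ⊕ H⁴ ⊂ A`: `H²` is spanned by `n` and the primitive classes, and
the latter are spanned by real ones. On each graded piece the opposedness of `ℱ` and `σ ℱ` then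
comes down to three facts: `H⁰` and `σ H⁰ = ℂ e^{2cn}` are both complements of `H² ⊕ H⁴`, `σ`
preserves `H²` modulo `H⁴`, and `σ n = n + 2c n²` with `n² ≠ 0` (as `∫ n² = K > 0`), which makes
`ℱ¹` and `σ ℱ¹` opposed on `⟨n, n²⟩`.
-/

namespace KahlerMixedHodge

section Lattice

variable {α : Type*} [Lattice α]

def IsOpposedOn (F G W W' : α) : Prop :=
  F ⊓ W ⊔ G ⊓ W ⊔ W' = W ∧ F ⊓ G ⊓ W ≤ W'

theorem isOpposedOn_self (F G W : α) : IsOpposedOn F G W W :=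
  ⟨sup_eq_right.2 (sup_le inf_le_right inf_le_right), inf_le_right⟩

theorem IsOpposedOn.symm {F G W W' : α} (h : IsOpposedOn F G W W') : IsOpposedOn G F W W' :=
  ⟨by rw [sup_comm (G ⊓ W)]; exact h.1, by rw [inf_comm G]; exact h.2⟩

variable [IsModularLattice α]

theorem IsOpposedOn.of_le_sup {F G W W' : α} (hW' : W' ≤ W) (hspan : W ≤ F ⊔ W')
    (hmeet : G ⊓ W ≤ W') : IsOpposedOn F G W W' := by
  refine ⟨le_antisymm (sup_le (sup_le inf_le_right inf_le_right) hW') ?_,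
    (inf_le_inf_right W inf_le_right).trans hmeet⟩
  calc W = (W' ⊔ F) ⊓ W := (inf_eq_right.2 (sup_comm F W' ▸ hspan)).symm
    _ = W' ⊔ F ⊓ W := sup_inf_assoc_of_le F hW'
    _ ≤ F ⊓ W ⊔ G ⊓ W ⊔ W' := sup_le le_sup_right (le_sup_left.trans le_sup_left)

theorem isOpposedOn_of_le_left {F G : ℤ → α} (hF : Antitone F) (hG : Antitone G) {W W' : α}
    (hW' : W' ≤ W) {a b p q : ℤ} (hpq : p + q = a + b) (hpa : p ≤ a)
    (hspan : W ≤ F a ⊔ W') (hmeet : G b ⊓ W ≤ W') : IsOpposedOn (F p) (G q) W W' :=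
  .of_le_sup hW' (hspan.trans (sup_le_sup_right (hF hpa) _))
    ((inf_le_inf_right _ (hG (by omega))).trans hmeet)

theorem isOpposedOn_of_le_right {F G : ℤ → α} (hF : Antitone F) (hG : Antitone G) {W W' : α}
    (hW' : W' ≤ W) {a b p q : ℤ} (hpq : p + q = a + b) (hqb : q ≤ b)
    (hspan : W ≤ G b ⊔ W') (hmeet : F a ⊓ W ≤ W') : IsOpposedOn (F p) (G q) W W' :=
  (isOpposedOn_of_le_left hG hF hW' (by omega) hqb hspan hmeet).symm

end Lattice

section Filtrations

def weightFiltration {α : Type*} [Lattice α] [OrderBot α] (L P T : α) : ℤ → α := fun l =>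
  if l ≤ 0 then ⊥ else if l = 1 then L else if l ≤ 3 then L ⊔ P else T

def hodgeFiltration {α : Type*} [Lattice α] [BoundedOrder α] (H0 H2 : α) : ℤ → α := fun p =>
  if p ≤ 0 then ⊤ else if p = 1 then H0 ⊔ H2 else if p = 2 then H0 else ⊥

variable {α β : Type*} [Lattice α] [OrderBot α] [Lattice β] [OrderBot β]

theorem weightFiltration_of_nonpos {L P T : α} {l : ℤ} (hl : l ≤ 0) :
    weightFiltration L P T l = ⊥ :=
  if_pos hl

theorem weightFiltration_of_four_le {L P T : α} {l : ℤ} (hl : 4 ≤ l) :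
    weightFiltration L P T l = T := by
  simp [weightFiltration, show ¬ l ≤ 0 by omega, show l ≠ 1 by omega, show ¬ l ≤ 3 by omega]

theorem weightFiltration_le {L P T : α} (hL : L ≤ T) (hP : P ≤ T) (l : ℤ) :
    weightFiltration L P T l ≤ T := by
  unfold weightFiltration
  split_ifs
  exacts [bot_le, hL, sup_le hL hP, le_rfl]

theorem weightFiltration_monotone {L P T : α} (h : L ⊔ P ≤ T) :
    Monotone (weightFiltration L P T) := by
  intro a b hab
  unfold weightFiltration
  split_ifs <;> first | omega | simp_all [le_sup_left.trans h]

theorem _root_.GaloisConnection.l_weightFiltration {l : α → β} {u : β → α}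
    (gc : GaloisConnection l u) (L P T : α) (k : ℤ) :
    l (weightFiltration L P T k) = weightFiltration (l L) (l P) (l T) k := by
  unfold weightFiltration
  split_ifs
  exacts [gc.l_bot, rfl, gc.l_sup, rfl]

theorem hodgeFiltration_antitone {α : Type*} [Lattice α] [BoundedOrder α] (H0 H2 : α) :
    Antitone (hodgeFiltration H0 H2) := by
  intro a b hab
  unfold hodgeFiltration
  split_ifs <;> first | omega | simp

end Filtrations

section Opposedness

open Submodule

variable {A : Type*} [CommRing A] [Algebra ℂ A] {H0 H2 H4 : Submodule ℂ A} {n : A}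
  {σ : A →ₛₗ[starRingEnd ℂ] A}

theorem isOpposedOn_sup_map_span_pair (hn : n ∈ H2) (hH4 : H4 = span ℂ {n * n})
    (hnn : n * n ≠ 0) (h4 : Disjoint (H0 ⊔ H2) H4) (hσσ : Function.Involutive σ)
    (hσn : σ n = n + (2 * Complex.I) • (n * n)) :
    IsOpposedOn (H0 ⊔ H2) ((H0 ⊔ H2).map σ) (span ℂ {n, n * n}) ⊥ := by
  have hn' : n ∈ H0 ⊔ H2 := mem_sup_right hn
  have hσn' : σ n ∈ span ℂ {n, n * n} := hσn ▸ add_mem (subset_span (by simp))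
    (smul_mem _ _ (subset_span (by simp)))
  have h2I : 2 * Complex.I ≠ 0 := mul_ne_zero two_ne_zero Complex.I_ne_zero
  have no_sq : ∀ s t : ℂ, s • n + t • (n * n) ∈ H0 ⊔ H2 → t = 0 := by
    intro s t h
    have hH4 : t • (n * n) ∈ H4 := hH4 ▸ smul_mem _ t (mem_span_singleton_self _)
    have hF : t • (n * n) ∈ H0 ⊔ H2 := by simpa using sub_mem h (smul_mem _ s hn')
    exact (smul_eq_zero.1 (disjoint_def.1 h4 _ hF hH4)).resolve_right hnn
  refine ⟨le_antisymm (sup_le (sup_le inf_le_right inf_le_right) bot_le) ?_, ?_⟩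
  · have hnF : n ∈ (H0 ⊔ H2) ⊓ span ℂ {n, n * n} := ⟨hn', subset_span (by simp)⟩
    have hσnG : σ n ∈ (H0 ⊔ H2).map σ ⊓ span ℂ {n, n * n} := ⟨mem_map_of_mem hn', hσn'⟩
    have hsq : n * n = (2 * Complex.I)⁻¹ • (σ n - n) := by
      rw [hσn, add_sub_cancel_left, smul_smul, inv_mul_cancel₀ h2I, one_smul]
    rw [sup_bot_eq, span_le, Set.insert_subset_iff, Set.singleton_subset_iff]
    have := smul_mem _ (2 * Complex.I)⁻¹ (sub_mem (mem_sup_right hσnG) (mem_sup_left hnF))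
    exact ⟨mem_sup_left hnF, hsq ▸ this⟩
  · rintro _ ⟨⟨hyF, y, hy, rfl⟩, hyW⟩
    obtain ⟨s, t, hst⟩ := mem_span_pair.1 hyW
    obtain rfl : t = 0 := no_sq s t (hst ▸ hyF)
    rw [zero_smul, add_zero] at hst
    have hy' : starRingEnd ℂ s • n + (starRingEnd ℂ s * (2 * Complex.I)) • (n * n) ∈ H0 ⊔ H2 := by
      rwa [← hσσ y, ← hst, map_smulₛₗ, hσn, smul_add, smul_smul] at hy
    have hs : s = 0 := by
      simpa [h2I] using no_sq _ _ hy'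
    rw [← hst, hs, zero_smul]
    exact zero_mem _

theorem isOpposedOn_weightFiltration {P : Submodule ℂ A} (hn : n ∈ H2)
    (hH4 : H4 = span ℂ {n * n}) (hnn : n * n ≠ 0) (hP : span ℂ {n, n * n} ⊔ P = H2 ⊔ H4)
    (h0 : IsCompl H0 (H2 ⊔ H4)) (hσ0 : IsCompl (H0.map σ) (H2 ⊔ H4))
    (h4 : Disjoint (H0 ⊔ H2) H4) (hσ2 : H2 ≤ H2.map σ ⊔ H4) (hσσ : Function.Involutive σ)
    (hσn : σ n = n + (2 * Complex.I) • (n * n)) {k p q : ℤ} (hpq : p + q = k + 1) :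
    IsOpposedOn (hodgeFiltration H0 H2 p) ((hodgeFiltration H0 H2 q).map σ)
      (weightFiltration (span ℂ {n, n * n}) P ⊤ k)
      (weightFiltration (span ℂ {n, n * n}) P ⊤ (k - 1)) := by
  set F := hodgeFiltration H0 H2
  set W := weightFiltration (span ℂ {n, n * n}) P ⊤
  have hF : Antitone F := hodgeFiltration_antitone H0 H2
  have hG : Antitone fun q ↦ (F q).map σ := fun _ _ h ↦ map_mono (hF h)
  have hF0 : F 0 = ⊤ := by simp [F, hodgeFiltration]
  have hF1 : F 1 = H0 ⊔ H2 := by simp [F, hodgeFiltration]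
  have hF2 : F 2 = H0 := by simp [F, hodgeFiltration]
  have hF3 : F 3 = ⊥ := by simp [F, hodgeFiltration]
  have hW0 : ∀ l ≤ 0, W l = ⊥ := fun _ ↦ weightFiltration_of_nonpos
  have hW1 : W 1 = span ℂ {n, n * n} := by simp [W, weightFiltration]
  have hW2 : W 2 = H2 ⊔ H4 := by simp [W, weightFiltration, hP]
  have hW3 : W 3 = H2 ⊔ H4 := by simp [W, weightFiltration, hP]
  have hW4 : ∀ l, 4 ≤ l → W l = ⊤ := fun _ ↦ weightFiltration_of_four_le
  have hH4L : H4 ≤ span ℂ {n, n * n} := hH4 ▸ span_mono (by simp)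
  have hL : span ℂ {n, n * n} ≤ H2 ⊔ H4 := hW2 ▸ weightFiltration_monotone le_top one_le_two
  have hσtop : (⊤ : Submodule ℂ A).map σ = ⊤ := by
    rw [Submodule.map_top, LinearMap.range_eq_top]
    exact hσσ.surjective
  rcases (by omega : k ≤ 0 ∨ k = 1 ∨ k = 2 ∨ k = 3 ∨ k = 4 ∨ 5 ≤ k) with
    hk | rfl | rfl | rfl | rfl | hk
  · rw [hW0 k hk, hW0 (k - 1) (by omega)]
    exact isOpposedOn_self _ _ _
  · rw [show (1 : ℤ) - 1 = 0 by norm_num, hW0 0 le_rfl, hW1]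
    rcases (by omega : p ≤ 0 ∨ p = 1 ∨ 2 ≤ p) with hp | rfl | hp
    · refine isOpposedOn_of_le_left hF hG bot_le (a := 0) (b := 2) (by omega) hp
        (by simp [hF0]) ?_
      rw [hF2]
      exact (hσ0.disjoint.mono_right hL).le_bot
    · obtain rfl : q = 1 := by omega
      exact hF1 ▸ isOpposedOn_sup_map_span_pair hn hH4 hnn h4 hσσ hσn
    · refine isOpposedOn_of_le_right hF hG bot_le (a := 2) (b := 0) (by omega) (by omega)
        (by simp [hF0, hσtop]) ?_
      rw [hF2]
      exact (h0.disjoint.mono_right hL).le_bot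
  · rw [show (2 : ℤ) - 1 = 1 by norm_num, hW2, hW1]
    rcases le_or_gt p 1 with hp | hp
    · refine isOpposedOn_of_le_left hF hG hL (a := 1) (b := 2) (by omega) hp ?_ ?_
      · rw [hF1]
        exact sup_le (le_sup_right.trans le_sup_left) (hH4L.trans le_sup_right)
      · rw [hF2, hσ0.inf_eq_bot]
        exact bot_le
    · refine isOpposedOn_of_le_right hF hG hL (a := 2) (b := 1) (by omega) (by omega) ?_ ?_
      · rw [hF1]
        exact sup_le (hσ2.trans (sup_le_sup (map_mono le_sup_right) hH4L))
          (hH4L.trans le_sup_right)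
      · rw [hF2, h0.inf_eq_bot]
        exact bot_le
  · rw [show (3 : ℤ) - 1 = 2 by norm_num, hW2, hW3]
    exact isOpposedOn_self _ _ _
  · rw [show (4 : ℤ) - 1 = 3 by norm_num, hW3, hW4 4 le_rfl]
    rcases le_or_gt p 2 with hp | hp
    · exact isOpposedOn_of_le_left hF hG le_top (a := 2) (b := 3) (by omega) hp
        (hF2 ▸ h0.codisjoint.top_le) (by simp [hF3])
    · exact isOpposedOn_of_le_right hF hG le_top (a := 3) (b := 2) (by omega) (by omega)
        (hF2 ▸ hσ0.codisjoint.top_le) (by simp [hF3])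
  · rw [hW4 k (by omega), hW4 (k - 1) (by omega)]
    exact isOpposedOn_self _ _ _


theorem IsOpposedOn.restrictScalars {F G W W' : Submodule ℂ A} {σ : A →ₛₗ[starRingEnd ℂ] A}
    {σℝ : A →ₗ[ℝ] A} (hσ : ∀ x, σℝ x = σ x) (h : IsOpposedOn F (G.map σ) W W') :
    (F ⊓ W).restrictScalars ℝ ⊔ (map σℝ (G.restrictScalars ℝ) ⊓ W.restrictScalars ℝ) ⊔
        W'.restrictScalars ℝ = W.restrictScalars ℝ ∧
      F.restrictScalars ℝ ⊓ map σℝ (G.restrictScalars ℝ) ⊓ W.restrictScalars ℝ ≤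
        W'.restrictScalars ℝ := by
  have hmap : map σℝ (G.restrictScalars ℝ) = (G.map σ).restrictScalars ℝ := by
    ext; simp [hσ]
  simp only [hmap, ← restrictScalars_inf, ← restrictScalars_sup, restrictScalars_inj,
    restrictScalars_le]
  exact h

end Opposedness

section Submodules

open Submodule

theorem span_pair_add_smul {R M : Type*} [Ring R] [AddCommGroup M] [Module R M] (a b : M)
    (c : R) : span R {a + c • b, b} = span R {a, b} := by
  have ha : a ∈ span R {a, b} := subset_span (by simp)
  have hb : b ∈ span R {a, b} := subset_span (by simp)
  refine le_antisymm (span_le.2 ?_) (span_le.2 ?_) <;>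
    simp only [Set.insert_subset_iff, Set.singleton_subset_iff, SetLike.mem_coe]
  · exact ⟨add_mem ha (smul_mem _ c hb), hb⟩
  · have hab : a + c • b ∈ span R {a + c • b, b} := subset_span (by simp)
    have hb' : b ∈ span R {a + c • b, b} := subset_span (by simp)
    exact ⟨by simpa using sub_mem hab (smul_mem _ c hb'), hb'⟩

theorem gc_span_restrictScalars {R S M : Type*} [CommSemiring R] [Semiring S] [Algebra R S]
    [AddCommMonoid M] [Module R M] [Module S M] [IsScalarTower R S M] :
    GaloisConnection (fun N : Submodule R M ↦ span S (N : Set M)) (restrictScalars R) :=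
  fun _ _ ↦ span_le

theorem disjoint_sup_right_of_indep {R M : Type*} [Ring R] [AddCommGroup M] [Module R M]
    {P Q S : Submodule R M}
    (h : ∀ a ∈ P, ∀ x ∈ Q, ∀ y ∈ S, a + x + y = 0 → a = 0 ∧ x = 0 ∧ y = 0) :
    Disjoint P (Q ⊔ S) := by
  refine disjoint_def.2 fun x hxP hx ↦ ?_
  obtain ⟨y, hy, z, hz, rfl⟩ := mem_sup.1 hx
  exact (h _ hxP _ (neg_mem hy) _ (neg_mem hz) (by abel)).1

theorem disjoint_sup_left_of_indep {R M : Type*} [Ring R] [AddCommGroup M] [Module R M]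
    {P Q S : Submodule R M}
    (h : ∀ a ∈ P, ∀ x ∈ Q, ∀ y ∈ S, a + x + y = 0 → a = 0 ∧ x = 0 ∧ y = 0) :
    Disjoint (P ⊔ Q) S := by
  refine disjoint_def.2 fun x hx hxS ↦ ?_
  obtain ⟨a, ha, y, hy, rfl⟩ := mem_sup.1 hx
  exact neg_eq_zero.1 (h _ ha _ hy _ (neg_mem hxS) (by abel)).2.2

theorem isCompl_span_singleton_of_sub_one_mem {R A : Type*} [CommRing R] [Ring A]
    [Algebra R A] {M : Submodule R A} {u : A} (h : IsCompl (span R {1}) M) (hu : u - 1 ∈ M) :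
    IsCompl (span R {u}) M := by
  refine ⟨disjoint_def.2 fun x hx hxM ↦ ?_, codisjoint_iff_le_sup.2 ?_⟩
  · obtain ⟨c, rfl⟩ := mem_span_singleton.1 hx
    have hc : c • (1 : A) ∈ M := by
      simpa only [smul_sub, sub_sub_cancel] using sub_mem hxM (smul_mem M c hu)
    have hc0 : c • (1 : A) = 0 :=
      disjoint_def.1 h.disjoint _ (smul_mem _ c (mem_span_singleton_self 1)) hc
    rw [← smul_one_mul, hc0, zero_mul]
  · have h1 : (1 : A) ∈ span R {u} ⊔ M := by
      simpa using sub_mem (mem_sup_left (mem_span_singleton_self u)) (mem_sup_right hu)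
    exact h.codisjoint.top_le.trans (sup_le (span_le.2 (by simpa using h1)) le_sup_right)

theorem span_ker_sub_id_inf {M : Type*} [AddCommGroup M] [Module ℂ M] [Module ℝ M]
    [IsScalarTower ℝ ℂ M] (conj : M →ₗ[ℝ] M) (hcc : ∀ x, conj (conj x) = x)
    (hca : ∀ (z : ℂ) (x : M), conj (z • x) = starRingEnd ℂ z • conj x) (S : Submodule ℂ M)
    (hS : ∀ x ∈ S, conj x ∈ S) :
    span ℂ ((LinearMap.ker (conj - LinearMap.id) ⊓ S.restrictScalars ℝ : Submodule ℝ M) : Set M)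
      = S := by
  refine le_antisymm (span_le.2 fun _ hx ↦ hx.2) fun x hx ↦ ?_
  have hreal : ∀ y ∈ S, conj y = y → y ∈ span ℂ
      ((LinearMap.ker (conj - LinearMap.id) ⊓ S.restrictScalars ℝ : Submodule ℝ M) : Set M) :=
    fun y hyS hy ↦ subset_span ⟨by simpa [sub_eq_zero] using hy, hyS⟩
  have hre : conj ((1 / 2 : ℂ) • (x + conj x)) = (1 / 2 : ℂ) • (x + conj x) := by
    rw [hca, map_add, hcc, add_comm, map_div₀, map_one, map_ofNat]
  have him : conj ((Complex.I / 2) • (conj x - x)) = (Complex.I / 2) • (conj x - x) := by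
    rw [hca, map_sub, hcc]
    simp only [map_div₀, Complex.conj_I, map_ofNat]
    module
  have hsplit :
      x = (1 / 2 : ℂ) • (x + conj x) + Complex.I • ((Complex.I / 2) • (conj x - x)) := by
    rw [smul_smul, mul_div_assoc', Complex.I_mul_I]
    module
  rw [hsplit]
  exact add_mem (hreal _ (smul_mem _ _ (add_mem hx (hS x hx))) hre)
    (smul_mem _ _ (hreal _ (smul_mem _ _ (sub_mem (hS x hx) hx)) him))

end Submodules

section Exponential

variable {A : Type*} [CommRing A] [Algebra ℂ A] {n : A}

theorem algebraMap_I_mul_I : algebraMap ℂ A Complex.I * algebraMap ℂ A Complex.I = -1 := by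
  rw [← map_mul, Complex.I_mul_I, map_neg, map_one]

theorem algebraMap_half_mul_two : algebraMap ℂ A (1 / 2) * 2 = 1 := by
  rw [← map_ofNat (algebraMap ℂ A) 2, ← map_mul]
  norm_num

/-- `e^{√-1 n}`; this polynomial is the exponential as soon as `n ^ 3 = 0`. -/
noncomputable def expI (n : A) : A := 1 + Complex.I • n - (1 / 2 : ℂ) • (n * n)

theorem expI_mul_self (hn : n * (n * n) = 0) :
    expI n * expI n = 1 + (2 * Complex.I) • n - (2 : ℂ) • (n * n) := by
  simp only [expI, Algebra.smul_def, map_mul, map_ofNat]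
  linear_combination (n * n) * algebraMap_I_mul_I (A := A) -
    (n * n) * algebraMap_half_mul_two (A := A) +
    (-2 * algebraMap ℂ A Complex.I * algebraMap ℂ A (1 / 2) +
      algebraMap ℂ A (1 / 2) * algebraMap ℂ A (1 / 2) * n) * hn

theorem expI_mul_expI_neg (hn : n * (n * n) = 0) : expI n * expI (-n) = 1 := by
  simp only [expI, Algebra.smul_def]
  linear_combination -(n * n) * algebraMap_I_mul_I (A := A) -
    (n * n) * algebraMap_half_mul_two (A := A) +
    algebraMap ℂ A (1 / 2) * algebraMap ℂ A (1 / 2) * n * hn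

theorem mul_expI_self (hn : n * (n * n) = 0) : n * expI n = n + Complex.I • (n * n) := by
  simp only [expI, mul_add, mul_sub, mul_one, mul_smul_comm, hn, smul_zero, sub_zero]

theorem mul_expI_of_mul_eq_zero {x : A} (hx : x * n = 0) : x * expI n = x := by
  simp only [expI, mul_add, mul_sub, mul_one, mul_smul_comm, ← mul_assoc, hx, zero_mul,
    smul_zero, add_zero, sub_zero]

theorem conj_expI (conj : A →ₗ[ℝ] A)
    (hca : ∀ (z : ℂ) (x : A), conj (z • x) = starRingEnd ℂ z • conj x) (hc1 : conj 1 = 1)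
    (hcm : ∀ x y, conj (x * y) = conj x * conj y) (hcn : conj n = n) : conj (expI n) = expI (-n) := by
  simp only [expI, map_sub, map_add, hc1, hca, hcm, hcn, Complex.conj_I, map_div₀, map_one,
    map_ofNat, neg_smul, smul_neg, neg_mul_neg]

end Exponential

section TwistedConj

open Submodule

variable {A : Type*} [CommRing A] [Algebra ℂ A]

/-- For `u = expI n * expI n` this is the complex conjugation of `A` with respect to the real
form `{x * expI n | conj x = x}`: `conj (x * expI n) * u = x * expI n` as
`conj (expI n) * expI n = 1`. -/
def twistedConj (conj : A →ₗ[ℝ] A)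
    (hca : ∀ (z : ℂ) (x : A), conj (z • x) = starRingEnd ℂ z • conj x) (u : A) :
    A →ₛₗ[starRingEnd ℂ] A where
  toFun y := conj y * u
  map_add' x y := by rw [map_add, add_mul]
  map_smul' z x := by rw [hca, smul_mul_assoc]

variable {conj : A →ₗ[ℝ] A} {hca : ∀ (z : ℂ) (x : A), conj (z • x) = starRingEnd ℂ z • conj x}
  {u : A}

@[simp]
theorem twistedConj_apply (y : A) : twistedConj conj hca u y = conj y * u := rfl

theorem twistedConj_involutive (hcc : ∀ x, conj (conj x) = x)
    (hcm : ∀ x y, conj (x * y) = conj x * conj y) (hu : conj u * u = 1) :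
    Function.Involutive (twistedConj conj hca u) := fun y ↦ by
  rw [twistedConj_apply, twistedConj_apply, hcm, hcc, mul_assoc, hu, mul_one]

theorem map_twistedConj_span_one (hc1 : conj 1 = 1) :
    (span ℂ {1}).map (twistedConj conj hca u) = span ℂ {u} := by
  rw [map_span, Set.image_singleton, twistedConj_apply, hc1, one_mul]

theorem le_map_twistedConj_sup {H2 H4 : Submodule ℂ A} (hcc : ∀ x, conj (conj x) = x)
    (hcH2 : ∀ x ∈ H2, conj x ∈ H2) (hu : ∀ v ∈ H2, v * u - v ∈ H4) :
    H2 ≤ H2.map (twistedConj conj hca u) ⊔ H4 := fun v hv ↦ by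
  have hσv : twistedConj conj hca u (conj v) = v * u := by rw [twistedConj_apply, hcc]
  have := sub_mem (mem_sup_left (mem_map_of_mem (f := twistedConj conj hca u) (hcH2 v hv)))
    (mem_sup_right (S := H2.map (twistedConj conj hca u)) (hu v hv))
  rwa [hσv, sub_sub_cancel] at this

end TwistedConj

section KahlerSurface

open Submodule

variable {A : Type*} [CommRing A] [Algebra ℂ A]

theorem span_sup_le_map_ker {H2 : Submodule ℂ A} {n : A} {conj : A →ₗ[ℝ] A}
    (hcm : ∀ x y, conj (x * y) = conj x * conj y) (hcn : conj n = n)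
    (hn3 : n * (n * n) = 0) :
    span ℝ {n + Complex.I • (n * n), n * n} ⊔
        (LinearMap.ker (conj - LinearMap.id) ⊓
          (H2 ⊓ LinearMap.ker (LinearMap.mulRight ℂ n)).restrictScalars ℝ) ≤
      (LinearMap.ker (conj - LinearMap.id)).map
        ((LinearMap.mulRight ℂ (expI n)).restrictScalars ℝ) := by
  have hreal : ∀ x, conj x = x → x * expI n ∈ (LinearMap.ker (conj - LinearMap.id)).map
      ((LinearMap.mulRight ℂ (expI n)).restrictScalars ℝ) :=
    fun x hx ↦ ⟨x, by simpa [sub_eq_zero] using hx, rfl⟩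
  refine sup_le ?_ fun x ⟨hx, _, hxn⟩ ↦ ?_
  · rw [span_le, Set.insert_subset_iff, Set.singleton_subset_iff]
    refine ⟨mul_expI_self hn3 ▸ hreal n hcn, ?_⟩
    have := hreal (n * n) (by rw [hcm, hcn])
    rwa [mul_expI_of_mul_eq_zero (by rw [mul_assoc, hn3])] at this
  · have := hreal x (by simpa [sub_eq_zero] using hx)
    rwa [mul_expI_of_mul_eq_zero hxn] at this

theorem span_weightFiltration {H2 : Submodule ℂ A} {n : A} {conj : A →ₗ[ℝ] A}
    (hcc : ∀ x, conj (conj x) = x) (hcm : ∀ x y, conj (x * y) = conj x * conj y)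
    (hca : ∀ (z : ℂ) (x : A), conj (z • x) = (starRingEnd ℂ z) • conj x)
    (hcH2 : ∀ x ∈ H2, conj x ∈ H2) (hcn : conj n = n) (hn3 : n * (n * n) = 0) (l : ℤ) :
    span ℂ ((weightFiltration (span ℝ {n + Complex.I • (n * n), n * n})
        (LinearMap.ker (conj - LinearMap.id) ⊓
          (H2 ⊓ LinearMap.ker (LinearMap.mulRight ℂ n)).restrictScalars ℝ)
        ((LinearMap.ker (conj - LinearMap.id)).map
          ((LinearMap.mulRight ℂ (expI n)).restrictScalars ℝ)) l : Submodule ℝ A) : Set A) =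
      weightFiltration (span ℂ {n, n * n}) (H2 ⊓ LinearMap.ker (LinearMap.mulRight ℂ n)) ⊤ l := by
  have hprim : ∀ x ∈ H2 ⊓ LinearMap.ker (LinearMap.mulRight ℂ n),
      conj x ∈ H2 ⊓ LinearMap.ker (LinearMap.mulRight ℂ n) := by
    rintro x ⟨hx, hxn⟩
    refine ⟨hcH2 x hx, ?_⟩
    simp only [SetLike.mem_coe, LinearMap.mem_ker, LinearMap.mulRight_apply] at hxn ⊢
    rw [← hcn, ← hcm, hxn, map_zero]
  have hreal : span ℂ (LinearMap.ker (conj - LinearMap.id) : Set A) = ⊤ := by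
    simpa using span_ker_sub_id_inf conj hcc hca ⊤ fun _ _ ↦ trivial
  have hunit : Function.Surjective (LinearMap.mulRight ℂ (expI n)) := fun y ↦
    ⟨y * expI (-n), by rw [LinearMap.mulRight_apply, mul_assoc, mul_comm (expI (-n)),
      expI_mul_expI_neg hn3, mul_one]⟩
  rw [gc_span_restrictScalars.l_weightFiltration, span_span_of_tower, span_pair_add_smul,
    span_ker_sub_id_inf conj hcc hca _ hprim, map_coe, LinearMap.coe_restrictScalars, span_image,
    hreal, Submodule.map_top, LinearMap.range_eq_top.2 hunit]

theorem isOpposedOn_twistedConj {H0 H2 H4 : Submodule ℂ A} {n : A} {conj : A →ₗ[ℝ] A}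
    (hsum : H0 ⊔ H2 ⊔ H4 = ⊤)
    (hindep : ∀ a ∈ H0, ∀ x ∈ H2, ∀ y ∈ H4, a + x + y = 0 → a = 0 ∧ x = 0 ∧ y = 0)
    (hH0 : H0 = span ℂ {1}) (hmul22 : ∀ x ∈ H2, ∀ y ∈ H2, x * y ∈ H4)
    (hmul24 : ∀ x ∈ H2, ∀ y ∈ H4, x * y = 0) (hcc : ∀ x, conj (conj x) = x)
    (hcm : ∀ x y, conj (x * y) = conj x * conj y)
    (hca : ∀ (z : ℂ) (x : A), conj (z • x) = (starRingEnd ℂ z) • conj x) (hc1 : conj 1 = 1)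
    (hcH2 : ∀ x ∈ H2, conj x ∈ H2) (hn : n ∈ H2) (hcn : conj n = n) (hnn : n * n ≠ 0)
    (hH4 : H4 = span ℂ {n * n})
    (hlef : H2 = (H2 ⊓ LinearMap.ker (LinearMap.mulRight ℂ n)) ⊔ span ℂ {n})
    {k p q : ℤ} (hpq : p + q = k + 1) :
    IsOpposedOn (hodgeFiltration H0 H2 p)
      ((hodgeFiltration H0 H2 q).map (twistedConj conj hca (expI n * expI n)))
      (weightFiltration (span ℂ {n, n * n}) (H2 ⊓ LinearMap.ker (LinearMap.mulRight ℂ n)) ⊤ k)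
      (weightFiltration (span ℂ {n, n * n}) (H2 ⊓ LinearMap.ker (LinearMap.mulRight ℂ n)) ⊤
        (k - 1)) := by
  have hnn4 : n * n ∈ H4 := hmul22 n hn n hn
  have hn3 : n * (n * n) = 0 := hmul24 n hn _ hnn4
  have h0 : IsCompl H0 (H2 ⊔ H4) :=
    ⟨disjoint_sup_right_of_indep hindep, codisjoint_iff.2 (by rw [← sup_assoc, hsum])⟩
  have hσ0 : IsCompl (H0.map (twistedConj conj hca (expI n * expI n))) (H2 ⊔ H4) := by
    rw [hH0, map_twistedConj_span_one hc1]
    refine isCompl_span_singleton_of_sub_one_mem (hH0 ▸ h0) ?_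
    rw [expI_mul_self hn3, sub_right_comm, add_sub_cancel_left]
    exact sub_mem (mem_sup_left (smul_mem _ _ hn)) (mem_sup_right (smul_mem _ _ hnn4))
  have hσ2 : H2 ≤ H2.map (twistedConj conj hca (expI n * expI n)) ⊔ H4 := by
    refine le_map_twistedConj_sup hcc hcH2 fun v hv ↦ ?_
    rw [expI_mul_self hn3, mul_sub, mul_add, mul_one, mul_smul_comm, mul_smul_comm,
      hmul24 v hv _ hnn4, smul_zero, sub_zero, add_sub_cancel_left]
    exact smul_mem _ _ (hmul22 v hv n hn)
  have hσσ : Function.Involutive (twistedConj conj hca (expI n * expI n)) := by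
    refine twistedConj_involutive hcc hcm ?_
    rw [hcm, conj_expI conj hca hc1 hcm hcn, mul_mul_mul_comm, mul_comm (expI (-n)),
      expI_mul_expI_neg hn3, one_mul]
  have hσn : twistedConj conj hca (expI n * expI n) n = n + (2 * Complex.I) • (n * n) := by
    rw [twistedConj_apply, hcn, expI_mul_self hn3, mul_sub, mul_add, mul_one, mul_smul_comm,
      mul_smul_comm, hn3, smul_zero, sub_zero]
  have hP : span ℂ {n, n * n} ⊔ (H2 ⊓ LinearMap.ker (LinearMap.mulRight ℂ n)) = H2 ⊔ H4 := by
    conv_rhs => rw [hlef, hH4]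
    rw [span_insert]
    ac_rfl
  exact isOpposedOn_weightFiltration hn hH4 hnn hP h0 hσ0 (disjoint_sup_left_of_indep hindep)
    hσ2 hσσ hσn hpq

end KahlerSurface

end KahlerMixedHodge

open KahlerMixedHodge

theorem stmt9_general {A : Type*} [CommRing A] [Algebra ℂ A]
    (H0 H2 H4 : Submodule ℂ A)
    (hsum : H0 ⊔ H2 ⊔ H4 = ⊤)
    (hindep : ∀ a ∈ H0, ∀ x ∈ H2, ∀ y ∈ H4, a + x + y = 0 → a = 0 ∧ x = 0 ∧ y = 0)
    (hH0 : H0 = Submodule.span ℂ {(1 : A)})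
    (hmul22 : ∀ x ∈ H2, ∀ y ∈ H2, x * y ∈ H4)
    (hmul24 : ∀ x ∈ H2, ∀ y ∈ H4, x * y = 0)
    (intg : A →ₗ[ℂ] ℂ)
    -- real structure
    (conj : A →ₗ[ℝ] A)
    (hcc : ∀ x, conj (conj x) = x)
    (hcm : ∀ x y, conj (x * y) = conj x * conj y)
    (hca : ∀ (z : ℂ) (x : A), conj (z • x) = (starRingEnd ℂ z) • conj x)
    (hc1 : conj 1 = 1)
    (hcH2 : ∀ x ∈ H2, conj x ∈ H2)
    -- the Kähler class
    (n : A) (hn : n ∈ H2) (hcn : conj n = n)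
    (K : ℝ) (hK : intg (n * n) = (K : ℂ)) (hKpos : 0 < K)
    (hH4 : H4 = Submodule.span ℂ {n * n})
    (hlef : H2 = (H2 ⊓ LinearMap.ker (LinearMap.mulRight ℂ n)) ⊔
      Submodule.span ℂ {n}) :
    -- e^{cn} with c = √−1 (note n³ = 0)
    let expc : A := 1 + Complex.I • n - (1 / 2 : ℂ) • (n * n)
    -- the real form A_ℝ = H^even(X,ℝ)·e^{cn} and its conjugation
    let Rpts : Submodule ℝ A := LinearMap.ker (conj - LinearMap.id)
    let ARsub : Submodule ℝ A :=
      Submodule.map ((LinearMap.mulRight ℂ expc).restrictScalars ℝ) Rpts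
    let conjAR : A →ₗ[ℝ] A :=
      ((LinearMap.mulRight ℂ (expc * expc)).restrictScalars ℝ).comp conj
    let prim : Submodule ℂ A := H2 ⊓ LinearMap.ker (LinearMap.mulRight ℂ n)
    let primR : Submodule ℝ A := Rpts ⊓ prim.restrictScalars ℝ
    -- the weight filtration 𝒲_• on A_ℝ
    let W : ℤ → Submodule ℝ A := fun l =>
      if l ≤ 0 then ⊥
      else if l = 1 then Submodule.span ℝ {n + Complex.I • (n * n), n * n}
      else if l ≤ 3 then Submodule.span ℝ {n + Complex.I • (n * n), n * n} ⊔ primR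
      else ARsub
    -- the Hodge filtration ℱ^• (by cohomological degree)
    let F : ℤ → Submodule ℂ A := fun p =>
      if p ≤ 0 then ⊤ else if p = 1 then H0 ⊔ H2 else if p = 2 then H0 else ⊥
    -- complexifications 𝒲_l ⊗ ℂ
    let WC : ℤ → Submodule ℂ A := fun l => Submodule.span ℂ (W l : Set A)
    -- (𝒲_•, ℱ^•) is an ℝ-mixed Hodge structure on A_ℝ:
    (∀ l : ℤ, W l ≤ ARsub) ∧
    Monotone W ∧
    Antitone F ∧
    -- for every k, ℱ and its conjAR-conjugate induce on Gr_k^𝒲 a pair of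
    -- k-opposed filtrations (pure ℝ-Hodge structure of weight k):
    (∀ k p q : ℤ, p + q = k + 1 →
      ((F p ⊓ WC k).restrictScalars ℝ ⊔
          (Submodule.map conjAR ((F q).restrictScalars ℝ) ⊓
            (WC k).restrictScalars ℝ) ⊔
          (WC (k - 1)).restrictScalars ℝ
        = (WC k).restrictScalars ℝ) ∧
      ((F p).restrictScalars ℝ ⊓
          Submodule.map conjAR ((F q).restrictScalars ℝ) ⊓
          (WC k).restrictScalars ℝ
        ≤ (WC (k - 1)).restrictScalars ℝ)) := by
  intro expc Rpts ARsub conjAR prim primR W F WC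
  have hn3 : n * (n * n) = 0 := hmul24 n hn _ (hmul22 n hn n hn)
  have hnn : n * n ≠ 0 := fun h ↦ hKpos.ne' (by rw [h, map_zero] at hK; exact_mod_cast hK.symm)
  have hLP := span_sup_le_map_ker (H2 := H2) hcm hcn hn3
  refine ⟨weightFiltration_le (le_sup_left.trans hLP) (le_sup_right.trans hLP),
    weightFiltration_monotone hLP, hodgeFiltration_antitone H0 H2, fun k p q hpq ↦ ?_⟩
  have hWC : ∀ l, WC l = weightFiltration (Submodule.span ℂ {n, n * n}) prim ⊤ l :=
    span_weightFiltration hcc hcm hca hcH2 hcn hn3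
  have hopp : IsOpposedOn (F p) ((F q).map (twistedConj conj hca (expc * expc))) (WC k)
      (WC (k - 1)) := by
    rw [hWC, hWC]
    exact isOpposedOn_twistedConj hsum hindep hH0 hmul22 hmul24 hcc hcm hca hc1 hcH2 hn hcn
      hnn hH4 hlef hpq
  exact hopp.restrictScalars fun _ ↦ rfl

/-- the ℝ-mixed Hodge structure on `A_ℝ = H^even(X,ℝ)·e^{cn}`,
`c = √−1`.  The even cohomology of a compact Kähler surface is modelled
abstractly by a ℂ-algebra `A` with grading `H0 ⊕ H2 ⊕ H4`, integration `intg`,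
real structure `conj`, and a real Kähler class `n ∈ H2` with `∫ n² = K > 0`.
With `𝒲_•` and `ℱ^•` as in the paper, `(𝒲_•, ℱ^•)` is an ℝ-mixed Hodge
structure on `A_ℝ`: the `𝒲_l` are ℝ-subspaces of `A_ℝ`, `𝒲` is increasing, `ℱ`
is decreasing, and on each `Gr_k^𝒲` the filtrations `ℱ` and its conjugate
(with respect to the real structure `A_ℝ`, i.e. `conjAR y = conj y · e^{2cn}`)
are `k`-opposed — the standard criterion for `ℱ` to induce a pure ℝ-Hodge
structure of weight `k` on `Gr_k^𝒲`. -/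
theorem stmt9 {A : Type*} [CommRing A] [Algebra ℂ A] [FiniteDimensional ℂ A]
    (H0 H2 H4 : Submodule ℂ A)
    (hsum : H0 ⊔ H2 ⊔ H4 = ⊤)
    (hindep : ∀ a ∈ H0, ∀ x ∈ H2, ∀ y ∈ H4, a + x + y = 0 → a = 0 ∧ x = 0 ∧ y = 0)
    (hH0 : H0 = Submodule.span ℂ {(1 : A)})
    (hmul22 : ∀ x ∈ H2, ∀ y ∈ H2, x * y ∈ H4)
    (hmul24 : ∀ x ∈ H2, ∀ y ∈ H4, x * y = 0)
    (hmul44 : ∀ x ∈ H4, ∀ y ∈ H4, x * y = 0)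
    (intg : A →ₗ[ℂ] ℂ)
    (hint0 : ∀ x ∈ H0 ⊔ H2, intg x = 0)
    (hnondeg : ∀ x : A, (∀ y : A, intg (x * y) = 0) → x = 0)
    -- real structure
    (conj : A →ₗ[ℝ] A)
    (hcc : ∀ x, conj (conj x) = x)
    (hcm : ∀ x y, conj (x * y) = conj x * conj y)
    (hca : ∀ (z : ℂ) (x : A), conj (z • x) = (starRingEnd ℂ z) • conj x)
    (hc1 : conj 1 = 1)
    (hcH0 : ∀ x ∈ H0, conj x ∈ H0)
    (hcH2 : ∀ x ∈ H2, conj x ∈ H2)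
    (hcH4 : ∀ x ∈ H4, conj x ∈ H4)
    -- the Kähler class
    (n : A) (hn : n ∈ H2) (hcn : conj n = n)
    (K : ℝ) (hK : intg (n * n) = (K : ℂ)) (hKpos : 0 < K)
    (hH4 : H4 = Submodule.span ℂ {n * n})
    (hlef : H2 = (H2 ⊓ LinearMap.ker (LinearMap.mulRight ℂ n)) ⊔
      Submodule.span ℂ {n}) :
    -- e^{cn} with c = √−1 (note n³ = 0)
    let expc : A := 1 + Complex.I • n - (1 / 2 : ℂ) • (n * n)
    -- the real form A_ℝ = H^even(X,ℝ)·e^{cn} and its conjugation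
    let Rpts : Submodule ℝ A := LinearMap.ker (conj - LinearMap.id)
    let ARsub : Submodule ℝ A :=
      Submodule.map ((LinearMap.mulRight ℂ expc).restrictScalars ℝ) Rpts
    let conjAR : A →ₗ[ℝ] A :=
      ((LinearMap.mulRight ℂ (expc * expc)).restrictScalars ℝ).comp conj
    let prim : Submodule ℂ A := H2 ⊓ LinearMap.ker (LinearMap.mulRight ℂ n)
    let primR : Submodule ℝ A := Rpts ⊓ prim.restrictScalars ℝ
    -- the weight filtration 𝒲_• on A_ℝ
    let W : ℤ → Submodule ℝ A := fun l =>
      if l ≤ 0 then ⊥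
      else if l = 1 then Submodule.span ℝ {n + Complex.I • (n * n), n * n}
      else if l ≤ 3 then Submodule.span ℝ {n + Complex.I • (n * n), n * n} ⊔ primR
      else ARsub
    -- the Hodge filtration ℱ^• (by cohomological degree)
    let F : ℤ → Submodule ℂ A := fun p =>
      if p ≤ 0 then ⊤ else if p = 1 then H0 ⊔ H2 else if p = 2 then H0 else ⊥
    -- complexifications 𝒲_l ⊗ ℂ
    let WC : ℤ → Submodule ℂ A := fun l => Submodule.span ℂ (W l : Set A)
    -- (𝒲_•, ℱ^•) is an ℝ-mixed Hodge structure on A_ℝ: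
    (∀ l : ℤ, W l ≤ ARsub) ∧
    Monotone W ∧
    Antitone F ∧
    -- for every k, ℱ and its conjAR-conjugate induce on Gr_k^𝒲 a pair of
    -- k-opposed filtrations (pure ℝ-Hodge structure of weight k):
    (∀ k p q : ℤ, p + q = k + 1 →
      ((F p ⊓ WC k).restrictScalars ℝ ⊔
          (Submodule.map conjAR ((F q).restrictScalars ℝ) ⊓
            (WC k).restrictScalars ℝ) ⊔
          (WC (k - 1)).restrictScalars ℝ
        = (WC k).restrictScalars ℝ) ∧
      ((F p).restrictScalars ℝ ⊓
          Submodule.map conjAR ((F q).restrictScalars ℝ) ⊓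
          (WC k).restrictScalars ℝ
        ≤ (WC (k - 1)).restrictScalars ℝ)) :=
  stmt9_general H0 H2 H4 hsum hindep hH0 hmul22 hmul24 intg conj hcc hcm hca hc1 hcH2 n hn hcn K hK
    hKpos hH4 hlef
end

section
/- With X a compact Kähler surface, n a Kähler class, c = √−1, and the mixed Hodge structure (𝒲_•, ℱ^•) on A_ℝ = H^even(X,ℝ)∪e^{cn} as above, the Hodge decomposition of the graded pieces is: Gr₁ has A^{1,0} = ℂn, A^{0,1} = ℂ(n² + (1/2c)n); Gr₂ has A^{1,1} = H²_prim(X,ℂ) (assuming h^{2,0} = h^{0,2} = 0); Gr₄ has A^{2,2} = ℂ·1; all other A^{p,q} vanish. -/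
/-!
Since `n³ = 0`, the truncated exponential `e = 1 + i n - n²/2` is a unit, so `A_ℝ · e` still spans
`A` over `ℂ`, i.e. `𝒲₄ ⊗ ℂ = A`; and `n e² = n + 2i n² = 2i (n² - (i/2) n)`, which gives `A^{0,1}`.
A subspace stable under conjugation is the complex span of its real points, so
`𝒲₂ ⊗ ℂ = ℂn ⊕ ℂn² ⊕ H²_prim(X, ℂ)`. Everything else is the modular law in the direct sum
`H⁰ ⊕ H² ⊕ H⁴`, where `ℂn ⊕ H²_prim ≤ H²` and `ℂn² = H⁴`.
-/

open Submodule

theorem inf_sup_eq_of_le_of_disjoint {α : Type*} [Lattice α] [OrderBot α] [IsModularLattice α]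
    {a b c d : α} (hb : b ≤ a) (hc : c ≤ d) (had : Disjoint a d) : a ⊓ (b ⊔ c) = b := by
  rw [inf_comm, sup_inf_assoc_of_le c hb, (had.symm.mono_left hc).eq_bot, sup_bot_eq]

section Module

variable {R M : Type*} [Ring R] [AddCommGroup M] [Module R M] {P Q S : Submodule R M}

theorem disjoint_sup_left_of_add_add_eq_zero
    (h : ∀ a ∈ P, ∀ x ∈ Q, ∀ y ∈ S, a + x + y = 0 → a = 0 ∧ x = 0 ∧ y = 0) :
    Disjoint (P ⊔ Q) S := by
  rw [disjoint_def]
  intro y hPQ hS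
  obtain ⟨a, ha, x, hx, rfl⟩ := mem_sup.mp hPQ
  obtain ⟨rfl, rfl, -⟩ := h a ha x hx _ (neg_mem hS) (add_neg_cancel _)
  exact add_zero 0

theorem disjoint_sup_right_of_add_add_eq_zero
    (h : ∀ a ∈ P, ∀ x ∈ Q, ∀ y ∈ S, a + x + y = 0 → a = 0 ∧ x = 0 ∧ y = 0) :
    Disjoint P (Q ⊔ S) := by
  rw [disjoint_def]
  intro a hP hQS
  obtain ⟨x, hx, y, hy, rfl⟩ := mem_sup.mp hQS
  exact (h _ hP _ (neg_mem hx) _ (neg_mem hy) (by abel)).1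

theorem span_pair_add_smul (x y : M) (r : R) : span R {x + r • y, y} = span R {x, y} := by
  apply le_antisymm <;> rw [span_le] <;> rintro z (rfl | rfl)
  · exact mem_span_pair.mpr ⟨1, r, by rw [one_smul]⟩
  · exact mem_span_pair.mpr ⟨0, 1, by rw [zero_smul, one_smul, zero_add]⟩
  · exact mem_span_pair.mpr ⟨1, -r, by rw [one_smul, neg_smul, add_neg_cancel_right]⟩
  · exact mem_span_pair.mpr ⟨0, 1, by rw [zero_smul, one_smul, zero_add]⟩

end Module

section RealStructure

variable {E : Type*} [AddCommGroup E] [Module ℂ E] (conj : E →ₗ[ℝ] E)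

theorem exists_eq_add_I_smul_of_conj
    (hca : ∀ (z : ℂ) (x : E), conj (z • x) = starRingEnd ℂ z • conj x)
    (hcc : ∀ x, conj (conj x) = x) (x : E) :
    ∃ r s : E, conj r = r ∧ conj s = s ∧
      r ∈ span ℂ {x, conj x} ∧ s ∈ span ℂ {x, conj x} ∧ x = r + Complex.I • s := by
  have hconj : starRingEnd ℂ (-Complex.I / 2) = Complex.I / 2 := by simp [map_div₀, map_ofNat]
  refine ⟨(1 / 2 : ℂ) • (x + conj x), (-Complex.I / 2) • (x - conj x), ?_, ?_,
    mem_span_pair.mpr ⟨1 / 2, 1 / 2, by module⟩,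
    mem_span_pair.mpr ⟨-Complex.I / 2, Complex.I / 2, by module⟩, ?_⟩
  · rw [hca, map_add, hcc]
    norm_num [add_comm, map_ofNat]
  · rw [hca, map_sub, hcc, hconj]
    module
  · rw [smul_smul, show Complex.I * (-Complex.I / 2) = 1 / 2 by norm_num [Complex.ext_iff]]
    module

theorem span_coe_sup (P Q : Submodule ℝ E) :
    span ℂ ((P ⊔ Q : Submodule ℝ E) : Set E) = span ℂ (P : Set E) ⊔ span ℂ (Q : Set E) := by
  rw [← P.span_eq, ← Q.span_eq, ← span_union, span_span_of_tower, span_span_of_tower,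
    span_span_of_tower, span_union]

theorem span_map_restrictScalars (f : E →ₗ[ℂ] E) (P : Submodule ℝ E) :
    span ℂ (P.map (f.restrictScalars ℝ) : Set E) = (span ℂ (P : Set E)).map f := by
  rw [map_coe, map_span]
  rfl

theorem map_restrictScalars_span_singleton
    (hca : ∀ (z : ℂ) (x : E), conj (z • x) = starRingEnd ℂ z • conj x) (x : E) :
    map conj ((span ℂ {x}).restrictScalars ℝ) = (span ℂ {conj x}).restrictScalars ℝ := by
  ext y
  simp only [mem_map, restrictScalars_mem, mem_span_singleton]
  constructor
  · rintro ⟨_, ⟨z, rfl⟩, rfl⟩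
    exact ⟨starRingEnd ℂ z, (hca z x).symm⟩
  · rintro ⟨z, rfl⟩
    exact ⟨starRingEnd ℂ z • x, ⟨_, rfl⟩, by rw [hca, Complex.conj_conj]⟩

theorem span_ker_sub_id_inf_restrictScalars
    (hca : ∀ (z : ℂ) (x : E), conj (z • x) = starRingEnd ℂ z • conj x)
    (hcc : ∀ x, conj (conj x) = x) (P : Submodule ℂ E) (hP : ∀ x ∈ P, conj x ∈ P) :
    span ℂ ((LinearMap.ker (conj - LinearMap.id) ⊓ P.restrictScalars ℝ : Submodule ℝ E) : Set E)
      = P := by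
  refine le_antisymm (span_le.mpr fun x hx => hx.2) fun x hx => ?_
  obtain ⟨r, s, hr, hs, hrx, hsx, hxrs⟩ := exists_eq_add_I_smul_of_conj conj hca hcc x
  have hpair : span ℂ {x, conj x} ≤ P := by
    rw [span_le]
    rintro y (rfl | rfl)
    exacts [hx, hP x hx]
  have hreal : ∀ y, conj y = y → y ∈ P → y ∈ span ℂ
      ((LinearMap.ker (conj - LinearMap.id) ⊓ P.restrictScalars ℝ : Submodule ℝ E) : Set E) :=
    fun y hy hyP => subset_span ⟨by simp [hy], hyP⟩
  rw [hxrs]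
  exact add_mem (hreal r hr (hpair hrx)) (smul_mem _ _ (hreal s hs (hpair hsx)))

theorem span_ker_sub_id (hca : ∀ (z : ℂ) (x : E), conj (z • x) = starRingEnd ℂ z • conj x)
    (hcc : ∀ x, conj (conj x) = x) :
    span ℂ (LinearMap.ker (conj - LinearMap.id) : Set E) = ⊤ := by
  simpa using span_ker_sub_id_inf_restrictScalars conj hca hcc ⊤ fun _ _ => trivial

end RealStructure

section Algebra

variable {A : Type*} [Ring A] [Algebra ℂ A]

theorem algebraMap_I_mul_self : algebraMap ℂ A Complex.I * algebraMap ℂ A Complex.I = -1 := by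
  rw [← map_mul, Complex.I_mul_I, map_neg, map_one]

theorem two_mul_algebraMap_half : 2 * algebraMap ℂ A (1 / 2) = 1 := by
  rw [← map_ofNat (algebraMap ℂ A) 2, ← map_mul]
  norm_num

variable (conj : A →ₗ[ℝ] A)

theorem map_mulRight_comp_restrictScalars_span_singleton
    (hca : ∀ (z : ℂ) (x : A), conj (z • x) = starRingEnd ℂ z • conj x) (e x : A) :
    map (((LinearMap.mulRight ℂ e).restrictScalars ℝ).comp conj) ((span ℂ {x}).restrictScalars ℝ)
      = (span ℂ {conj x * e}).restrictScalars ℝ :=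
  map_restrictScalars_span_singleton _ (fun z y => by simp [hca]) x

theorem span_map_mulRight_ker_sub_id
    (hca : ∀ (z : ℂ) (x : A), conj (z • x) = starRingEnd ℂ z • conj x)
    (hcc : ∀ x, conj (conj x) = x) {e : A} (he : IsUnit e) :
    span ℂ ((LinearMap.ker (conj - LinearMap.id)).map
      ((LinearMap.mulRight ℂ e).restrictScalars ℝ) : Set A) = ⊤ := by
  rw [span_map_restrictScalars, span_ker_sub_id conj hca hcc, Submodule.map_top,
    LinearMap.range_eq_top]
  exact fun b => ⟨b * ↑he.unit⁻¹, he.unit.inv_mul_cancel_right b⟩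

end Algebra

section TruncatedExp

variable {A : Type*} [CommRing A] [Algebra ℂ A] {n : A}

theorem one_add_I_smul_sub_mul_one_sub_I_smul_sub (hn3 : n * (n * n) = 0) :
    (1 + Complex.I • n - (1 / 2 : ℂ) • (n * n)) * (1 - Complex.I • n - (1 / 2 : ℂ) • (n * n))
      = 1 := by
  have := algebraMap_I_mul_self (A := A)
  have := two_mul_algebraMap_half (A := A)
  simp only [Algebra.smul_def]
  grind

theorem mul_one_add_I_smul_sub_sq (hn3 : n * (n * n) = 0) :
    n * ((1 + Complex.I • n - (1 / 2 : ℂ) • (n * n)) * (1 + Complex.I • n - (1 / 2 : ℂ) • (n * n)))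
      = (2 * Complex.I) • (n * n - (Complex.I / 2) • n) := by
  have := algebraMap_I_mul_self (A := A)
  have := two_mul_algebraMap_half (A := A)
  simp only [Algebra.smul_def, map_mul, map_ofNat]
  grind

end TruncatedExp

theorem stmt10_general {A : Type*} [CommRing A] [Algebra ℂ A]
    (H0 H2 H4 : Submodule ℂ A)
    (hsum : H0 ⊔ H2 ⊔ H4 = ⊤)
    (hindep : ∀ a ∈ H0, ∀ x ∈ H2, ∀ y ∈ H4, a + x + y = 0 → a = 0 ∧ x = 0 ∧ y = 0)
    (hH0 : H0 = Submodule.span ℂ {(1 : A)})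
    (hmul22 : ∀ x ∈ H2, ∀ y ∈ H2, x * y ∈ H4)
    (hmul24 : ∀ x ∈ H2, ∀ y ∈ H4, x * y = 0)
    -- real structure
    (conj : A →ₗ[ℝ] A)
    (hcc : ∀ x, conj (conj x) = x)
    (hcm : ∀ x y, conj (x * y) = conj x * conj y)
    (hca : ∀ (z : ℂ) (x : A), conj (z • x) = (starRingEnd ℂ z) • conj x)
    (hcH2 : ∀ x ∈ H2, conj x ∈ H2)
    -- the Kähler class
    (n : A) (hn : n ∈ H2) (hcn : conj n = n)
    (hH4 : H4 = Submodule.span ℂ {n * n})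
    (hlef : H2 = (H2 ⊓ LinearMap.ker (LinearMap.mulRight ℂ n)) ⊔
      Submodule.span ℂ {n}) :
    let expc : A := 1 + Complex.I • n - (1 / 2 : ℂ) • (n * n)
    let Rpts : Submodule ℝ A := LinearMap.ker (conj - LinearMap.id)
    let ARsub : Submodule ℝ A :=
      Submodule.map ((LinearMap.mulRight ℂ expc).restrictScalars ℝ) Rpts
    let conjAR : A →ₗ[ℝ] A :=
      ((LinearMap.mulRight ℂ (expc * expc)).restrictScalars ℝ).comp conj
    let prim : Submodule ℂ A := H2 ⊓ LinearMap.ker (LinearMap.mulRight ℂ n)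
    let primR : Submodule ℝ A := Rpts ⊓ prim.restrictScalars ℝ
    let W : ℤ → Submodule ℝ A := fun l =>
      if l ≤ 0 then ⊥
      else if l = 1 then Submodule.span ℝ {n + Complex.I • (n * n), n * n}
      else if l ≤ 3 then Submodule.span ℝ {n + Complex.I • (n * n), n * n} ⊔ primR
      else ARsub
    let F : ℤ → Submodule ℂ A := fun p =>
      if p ≤ 0 then ⊤ else if p = 1 then H0 ⊔ H2 else if p = 2 then H0 else ⊥
    let WC : ℤ → Submodule ℂ A := fun l => Submodule.span ℂ (W l : Set A)
    -- Gr₁ (note 𝒲₀ = 0, so Gr₁ = 𝒲₁ ⊗ ℂ):  A^{1,0} = ℂ n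
    (F 1 ⊓ WC 1 = Submodule.span ℂ {n}) ∧
    -- A^{0,1} = conjugate(ℱ¹(Gr₁)) = ℂ (n² − (i/2) n)
    (Submodule.map conjAR ((F 1 ⊓ WC 1).restrictScalars ℝ)
      = (Submodule.span ℂ {n * n - (Complex.I / 2) • n}).restrictScalars ℝ) ∧
    -- A^{2,·}(Gr₁) = 0
    (F 2 ⊓ WC 1 = ⊥) ∧
    -- Gr₂: A^{2,0} = 0 and A^{1,1} = H²_prim(X,ℂ) is all of Gr₂
    (F 2 ⊓ WC 2 ≤ WC 1) ∧
    ((F 1 ⊓ WC 2) ⊔ WC 1 = prim ⊔ WC 1) ∧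
    (prim ⊔ WC 1 = WC 2) ∧
    -- Gr₃ = 0
    (WC 3 = WC 2) ∧
    -- Gr₄: A^{2,2} = ℂ·1, and it is all of Gr₄
    (F 2 ⊓ WC 4 = Submodule.span ℂ {(1 : A)}) ∧
    (Submodule.span ℂ {(1 : A)} ⊔ WC 3 = WC 4) := by
  intro expc Rpts ARsub conjAR prim primR W F WC
  have hnn : n * n ∈ H4 := hmul22 n hn n hn
  have hn3 : n * (n * n) = 0 := hmul24 n hn _ hnn
  have hF1 : F 1 = H0 ⊔ H2 := rfl
  have hF2 : F 2 = H0 := rfl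
  have hWC1 : WC 1 = span ℂ {n} ⊔ span ℂ {n * n} := by
    change span ℂ ((span ℝ {n + Complex.I • (n * n), n * n} : Submodule ℝ A) : Set A) = _
    rw [span_span_of_tower, span_pair_add_smul, span_insert]
  have hprim : span ℂ (primR : Set A) = prim := by
    refine span_ker_sub_id_inf_restrictScalars conj hca hcc prim fun x hx => ⟨hcH2 x hx.1, ?_⟩
    change conj x * n = 0
    rw [← hcn, ← hcm, show x * n = 0 from hx.2, map_zero]
  have hWC2 : WC 2 = span ℂ {n} ⊔ span ℂ {n * n} ⊔ prim := by
    rw [← hWC1, ← hprim]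
    exact span_coe_sup _ _
  have hWC3 : WC 3 = WC 2 := rfl
  have hWC4 : WC 4 = ⊤ := span_map_mulRight_ker_sub_id conj hca hcc
    (.of_mul_eq_one _ (one_add_I_smul_sub_mul_one_sub_I_smul_sub hn3))
  have hN : span ℂ {n} ≤ H2 := (span_singleton_le_iff_mem _ _).mpr hn
  have hN2 : span ℂ {n * n} ≤ H4 := (span_singleton_le_iff_mem _ _).mpr hnn
  have hprimH2 : prim ≤ H2 := inf_le_left
  have hWC2_le : span ℂ {n} ⊔ span ℂ {n * n} ⊔ prim ≤ H2 ⊔ H4 :=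
    sup_le (sup_le_sup hN hN2) (hprimH2.trans le_sup_left)
  have hH2_le : H2 ≤ span ℂ {n} ⊔ span ℂ {n * n} ⊔ prim :=
    hlef.le.trans (sup_le le_sup_right (le_sup_left.trans le_sup_left))
  have hH4_le : H4 ≤ span ℂ {n} ⊔ span ℂ {n * n} ⊔ prim :=
    hH4.le.trans (le_sup_right.trans le_sup_left)
  have hH02_H4 := disjoint_sup_left_of_add_add_eq_zero hindep
  have hH0_H24 := disjoint_sup_right_of_add_add_eq_zero hindep
  have hA10 : (H0 ⊔ H2) ⊓ (span ℂ {n} ⊔ span ℂ {n * n}) = span ℂ {n} :=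
    inf_sup_eq_of_le_of_disjoint (hN.trans le_sup_right) hN2 hH02_H4
  rw [hF1, hF2, hWC3, hWC1, hWC2, hWC4]
  refine ⟨hA10, ?_, (hH0_H24.mono_right (sup_le_sup hN hN2)).eq_bot, ?_, ?_, sup_comm _ _, rfl,
    by rw [inf_top_eq, hH0], ?_⟩
  · rw [hA10]
    refine (map_mulRight_comp_restrictScalars_span_singleton conj hca _ n).trans ?_
    rw [hcn, mul_one_add_I_smul_sub_sq hn3,
      span_singleton_smul_eq (isUnit_iff_ne_zero.mpr (by simp))]
  · rw [(hH0_H24.mono_right hWC2_le).eq_bot]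
    exact bot_le
  · rw [sup_right_comm, inf_sup_eq_of_le_of_disjoint ((sup_le hN hprimH2).trans le_sup_right) hN2
      hH02_H4, sup_comm (span ℂ {n}), sup_assoc, sup_left_idem]
  · rw [eq_top_iff, ← hsum, ← hH0]
    exact sup_le (sup_le le_sup_left (hH2_le.trans le_sup_right)) (hH4_le.trans le_sup_right)

/-- the Hodge decomposition of the graded pieces of the mixed
Hodge structure `(𝒲_•, ℱ^•)` on `A_ℝ = H^even(X,ℝ)·e^{cn}` (`c = √−1`), where
`A^{p,q} = ℱ^p(Gr_k^𝒲) ∩ conjugate(ℱ^q(Gr_k^𝒲))` and the conjugation with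
respect to the real form `A_ℝ` is `conjAR y = conj y · e^{2cn}`:
`Gr₁` has `A^{1,0} = ℂn` and `A^{0,1} = ℂ(n² + (1/2c)n) = ℂ(n² − (i/2)n)`
(with `A^{2,·}(Gr₁) = 0`); `Gr₂ = A^{1,1} = H²_prim(X,ℂ)` (with
`A^{2,0}(Gr₂) = 0`); `Gr₃ = 0`; `Gr₄` has `A^{2,2} = ℂ·1`. -/
theorem stmt10 {A : Type*} [CommRing A] [Algebra ℂ A] [FiniteDimensional ℂ A]
    (H0 H2 H4 : Submodule ℂ A)
    (hsum : H0 ⊔ H2 ⊔ H4 = ⊤)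
    (hindep : ∀ a ∈ H0, ∀ x ∈ H2, ∀ y ∈ H4, a + x + y = 0 → a = 0 ∧ x = 0 ∧ y = 0)
    (hH0 : H0 = Submodule.span ℂ {(1 : A)})
    (hmul22 : ∀ x ∈ H2, ∀ y ∈ H2, x * y ∈ H4)
    (hmul24 : ∀ x ∈ H2, ∀ y ∈ H4, x * y = 0)
    (hmul44 : ∀ x ∈ H4, ∀ y ∈ H4, x * y = 0)
    (intg : A →ₗ[ℂ] ℂ)
    (hint0 : ∀ x ∈ H0 ⊔ H2, intg x = 0)
    (hnondeg : ∀ x : A, (∀ y : A, intg (x * y) = 0) → x = 0)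
    -- real structure
    (conj : A →ₗ[ℝ] A)
    (hcc : ∀ x, conj (conj x) = x)
    (hcm : ∀ x y, conj (x * y) = conj x * conj y)
    (hca : ∀ (z : ℂ) (x : A), conj (z • x) = (starRingEnd ℂ z) • conj x)
    (hc1 : conj 1 = 1)
    (hcH0 : ∀ x ∈ H0, conj x ∈ H0)
    (hcH2 : ∀ x ∈ H2, conj x ∈ H2)
    (hcH4 : ∀ x ∈ H4, conj x ∈ H4)
    -- the Kähler class
    (n : A) (hn : n ∈ H2) (hcn : conj n = n)
    (K : ℝ) (hK : intg (n * n) = (K : ℂ)) (hKpos : 0 < K)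
    (hH4 : H4 = Submodule.span ℂ {n * n})
    (hlef : H2 = (H2 ⊓ LinearMap.ker (LinearMap.mulRight ℂ n)) ⊔
      Submodule.span ℂ {n}) :
    let expc : A := 1 + Complex.I • n - (1 / 2 : ℂ) • (n * n)
    let Rpts : Submodule ℝ A := LinearMap.ker (conj - LinearMap.id)
    let ARsub : Submodule ℝ A :=
      Submodule.map ((LinearMap.mulRight ℂ expc).restrictScalars ℝ) Rpts
    let conjAR : A →ₗ[ℝ] A :=
      ((LinearMap.mulRight ℂ (expc * expc)).restrictScalars ℝ).comp conj
    let prim : Submodule ℂ A := H2 ⊓ LinearMap.ker (LinearMap.mulRight ℂ n)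
    let primR : Submodule ℝ A := Rpts ⊓ prim.restrictScalars ℝ
    let W : ℤ → Submodule ℝ A := fun l =>
      if l ≤ 0 then ⊥
      else if l = 1 then Submodule.span ℝ {n + Complex.I • (n * n), n * n}
      else if l ≤ 3 then Submodule.span ℝ {n + Complex.I • (n * n), n * n} ⊔ primR
      else ARsub
    let F : ℤ → Submodule ℂ A := fun p =>
      if p ≤ 0 then ⊤ else if p = 1 then H0 ⊔ H2 else if p = 2 then H0 else ⊥
    let WC : ℤ → Submodule ℂ A := fun l => Submodule.span ℂ (W l : Set A)
    -- Gr₁ (note 𝒲₀ = 0, so Gr₁ = 𝒲₁ ⊗ ℂ):  A^{1,0} = ℂ n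
    (F 1 ⊓ WC 1 = Submodule.span ℂ {n}) ∧
    -- A^{0,1} = conjugate(ℱ¹(Gr₁)) = ℂ (n² − (i/2) n)
    (Submodule.map conjAR ((F 1 ⊓ WC 1).restrictScalars ℝ)
      = (Submodule.span ℂ {n * n - (Complex.I / 2) • n}).restrictScalars ℝ) ∧
    -- A^{2,·}(Gr₁) = 0
    (F 2 ⊓ WC 1 = ⊥) ∧
    -- Gr₂: A^{2,0} = 0 and A^{1,1} = H²_prim(X,ℂ) is all of Gr₂
    (F 2 ⊓ WC 2 ≤ WC 1) ∧
    ((F 1 ⊓ WC 2) ⊔ WC 1 = prim ⊔ WC 1) ∧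
    (prim ⊔ WC 1 = WC 2) ∧
    -- Gr₃ = 0
    (WC 3 = WC 2) ∧
    -- Gr₄: A^{2,2} = ℂ·1, and it is all of Gr₄
    (F 2 ⊓ WC 4 = Submodule.span ℂ {(1 : A)}) ∧
    (Submodule.span ℂ {(1 : A)} ⊔ WC 3 = WC 4) :=
  stmt10_general H0 H2 H4 hsum hindep hH0 hmul22 hmul24 conj hcc hcm hca hcH2 n hn hcn hH4 hlef
end

section
/- In the setting of a Frobenius structure (∘, ⟨·,·⟩, E) with a nilpotent vector field n satisfying [E, n] = 0 and the compatibility [E, x∘y] − [E,x]∘y − x∘[E,y] = x∘y, one has [E, n^{∘k}] = (k−1)·n^{∘k} for all 1 ≤ k ≤ d, and consequently each J_k = Ker(n^{∘k} ∘ ·) ⊂ TM is E-closed: x ∈ Γ(J_k) implies [E,x] ∈ Γ(J_k). -/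
/-- `opow mul e n k` is the `k`-fold `∘`-power `n^{∘k}` (with `n^{∘0} = e`, the
unit vector field). -/
def opow {Θ : Type*} (mul : Θ → Θ → Θ) (e n : Θ) : ℕ → Θ
  | 0 => e
  | k + 1 => mul n (opow mul e n k)

/-!
Since `[E, n] = 0`, the Leibniz-type rule `[E, x∘y] = [E,x]∘y + x∘[E,y] + x∘y` shows inductively
that `n^{∘k}` is an eigenvector of `[E, ·]` with eigenvalue `k − 1`. For any eigenvector `p`,
applying the same rule to `p ∘ x = 0` kills every term except `p ∘ [E, x]`, so the kernel of
`p ∘ ·` is `E`-closed.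
-/

theorem opow_one {Θ : Type*} {mul : Θ → Θ → Θ} {e n : Θ} (hmulcomm : ∀ x y, mul x y = mul y x)
    (hunit : ∀ x, mul e x = x) : opow mul e n 1 = n := by
  rw [opow, opow, hmulcomm, hunit]

section FrobeniusPowers

variable {Θ : Type*} [AddCommGroup Θ] {br mul : Θ → Θ → Θ} {e E n : Θ}

theorem zero_mul_of_add (hmulcomm : ∀ x y, mul x y = mul y x)
    (hmuladd : ∀ x y z, mul x (y + z) = mul x y + mul x z) (x : Θ) : mul 0 x = 0 := by
  rw [hmulcomm]
  exact (AddMonoidHom.mk' (mul x) (hmuladd x)).map_zero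

theorem mul_zsmul_of_add (hmuladd : ∀ x y z, mul x (y + z) = mul x y + mul x z)
    (c : ℤ) (x y : Θ) : mul x (c • y) = c • mul x y :=
  map_zsmul (AddMonoidHom.mk' (mul x) (hmuladd x)) c y

theorem zsmul_mul_of_add (hmulcomm : ∀ x y, mul x y = mul y x)
    (hmuladd : ∀ x y z, mul x (y + z) = mul x y + mul x z)
    (c : ℤ) (x y : Θ) : mul (c • x) y = c • mul x y := by
  rw [hmulcomm, mul_zsmul_of_add hmuladd, hmulcomm]

theorem br_opow_succ (hmulcomm : ∀ x y, mul x y = mul y x) (hunit : ∀ x, mul e x = x)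
    (hmuladd : ∀ x y z, mul x (y + z) = mul x y + mul x z)
    (hE1 : ∀ x y, br E (mul x y) = mul (br E x) y + mul x (br E y) + mul x y)
    (hEn : br E n = 0) (k : ℕ) :
    br E (opow mul e n (k + 1)) = (k : ℤ) • opow mul e n (k + 1) := by
  induction k with
  | zero => rw [opow_one hmulcomm hunit, hEn, Nat.cast_zero, zero_smul]
  | succ k ih =>
    change br E (mul n (opow mul e n (k + 1))) = _ • mul n (opow mul e n (k + 1))
    rw [hE1, hEn, ih, zero_mul_of_add hmulcomm hmuladd, mul_zsmul_of_add hmuladd]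
    push_cast
    module

theorem mul_br_eq_zero_of_br_eq_zsmul (hmulcomm : ∀ x y, mul x y = mul y x)
    (hmuladd : ∀ x y z, mul x (y + z) = mul x y + mul x z)
    (hbradd : ∀ x y z, br x (y + z) = br x y + br x z)
    (hE1 : ∀ x y, br E (mul x y) = mul (br E x) y + mul x (br E y) + mul x y)
    {p x : Θ} {c : ℤ} (hp : br E p = c • p) (hx : mul p x = 0) : mul p (br E x) = 0 := by
  have hbr0 : br E 0 = 0 := by simpa using hbradd E 0 0
  have := hE1 p x
  rwa [hx, hbr0, hp, zsmul_mul_of_add hmulcomm hmuladd, hx, smul_zero, zero_add, add_zero,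
    eq_comm] at this

end FrobeniusPowers

theorem stmt13_general {Θ : Type*} [AddCommGroup Θ]
    (br : Θ → Θ → Θ) (mul : Θ → Θ → Θ) (e E n : Θ) (d : ℕ)
    (hmulcomm : ∀ x y, mul x y = mul y x)
    (hunit : ∀ x, mul e x = x)
    (hmuladd : ∀ x y z, mul x (y + z) = mul x y + mul x z)
    (hbradd : ∀ x y z, br x (y + z) = br x y + br x z)
    (hE1 : ∀ x y, br E (mul x y) = mul (br E x) y + mul x (br E y) + mul x y)
    (hEn : br E n = 0) :
    -- [E, n^{∘k}] = (k−1)·n^{∘k}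
    (∀ k : ℕ, 1 ≤ k → k ≤ d →
      br E (opow mul e n k) = ((k : ℤ) - 1) • opow mul e n k) ∧
    -- J_k = Ker(n^{∘k} ∘ ·) is E-closed
    (∀ k : ℕ, 1 ≤ k → k ≤ d → ∀ x : Θ,
      mul (opow mul e n k) x = 0 → mul (opow mul e n k) (br E x) = 0) := by
  have hpow : ∀ k : ℕ, 1 ≤ k → br E (opow mul e n k) = ((k : ℤ) - 1) • opow mul e n k := by
    rintro (_ | k) hk
    · omega
    · rw [br_opow_succ hmulcomm hunit hmuladd hE1 hEn]
      push_cast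
      rw [add_sub_cancel_right]
  exact ⟨fun k hk _ => hpow k hk, fun k hk _ _ hx =>
    mul_br_eq_zero_of_br_eq_zsmul hmulcomm hmuladd hbradd hE1 (hpow k hk) hx⟩

/-- in a Frobenius structure (vector fields `Θ` with multiplication
`∘ = mul`, unit `e`, Lie bracket `br`, Euler field `E` satisfying
`[E,x∘y] − [E,x]∘y − x∘[E,y] = x∘y`), if `n` is a vector field with
`n^{∘d} = 0` and `[E,n] = 0`, then `[E, n^{∘k}] = (k−1)·n^{∘k}` for `1 ≤ k ≤ d`,
and consequently each `J_k = Ker(n^{∘k} ∘ ·)` is `E`-closed. -/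
theorem stmt13 {Θ : Type*} [AddCommGroup Θ]
    (br : Θ → Θ → Θ) (mul : Θ → Θ → Θ) (e E n : Θ) (d : ℕ)
    (hmulcomm : ∀ x y, mul x y = mul y x)
    (hmulassoc : ∀ x y z, mul (mul x y) z = mul x (mul y z))
    (hunit : ∀ x, mul e x = x)
    (hmuladd : ∀ x y z, mul x (y + z) = mul x y + mul x z)
    (hbradd : ∀ x y z, br x (y + z) = br x y + br x z)
    (hE1 : ∀ x y, br E (mul x y) = mul (br E x) y + mul x (br E y) + mul x y)
    (hnil : opow mul e n d = 0)
    (hEn : br E n = 0) :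
    -- [E, n^{∘k}] = (k−1)·n^{∘k}
    (∀ k : ℕ, 1 ≤ k → k ≤ d →
      br E (opow mul e n k) = ((k : ℤ) - 1) • opow mul e n k) ∧
    -- J_k = Ker(n^{∘k} ∘ ·) is E-closed
    (∀ k : ℕ, 1 ≤ k → k ≤ d → ∀ x : Θ,
      mul (opow mul e n k) x = 0 → mul (opow mul e n k) (br E x) = 0) :=
  stmt13_general br mul e E n d hmulcomm hunit hmuladd hbradd hE1 hEn
end

section
/- Let (∘, ⟨·,·⟩, E) be a Frobenius structure of charge D on M, and n a global vector field with n^{∘d} = 0, n^{∘(d−1)} ≠ 0, [E,n] = 0, ∇(n∘x) = n∘∇x. For k ≥ 1 and x, y sections of I_k/I_{k−1} with representatives x̃, ỹ ∈ Γ(J_k), the pairing (x,y)_k = ⟨x̃, ỹ∘n^{∘(k−1)}⟩ satisfies the Euler condition E(x,y)_k − ([E,x]_k, y)_k − (x, [E,y]_k)_k = (1 − D + k)(x,y)_k. For k = 0 and x = n∘x̃, y ∈ Γ(I) with (x,y)_0 = ⟨x̃, y⟩, one has E(x,y)_0 − ([E,x],y)_0 − (x,[E,y])_0 = (1−D)(x,y)_0.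 -/
/-!
The Euler field acts on `∘`-products by a derivation of weight one,
`[E, x∘y] = [E,x]∘y + x∘[E,y] + x∘y`. With `[E,n] = 0` this makes `n^{∘j}` an eigenvector,
`[E, n^{∘j}] = (j − 1) n^{∘j}`, and for any eigenvector `p` of weight `c` the pairing
`⟨x, y∘p⟩` gains `c + 1` over the charge term `2 − D` of the metric: at level `k` take
`p = n^{∘(k−1)}`, of weight `k − 2`; at level `0` take `p = n`, of weight `0`, and subtract the
two extra terms `⟨x, n∘y⟩` in the statement.
-/

section WeightOneDerivation

variable {Θ : Type*} [AddCommGroup Θ] {mul : Θ → Θ → Θ} {δ : Θ → Θ}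

theorem map_zsmul_of_map_add {M : Type*} [AddCommGroup M] {f : Θ → M}
    (hf : ∀ x y, f (x + y) = f x + f y) (c : ℤ) (x : Θ) : f (c • x) = c • f x :=
  map_zsmul (AddMonoidHom.mk' f hf) c x

theorem apply_unit_eq_neg {e : Θ} (hcomm : ∀ x y, mul x y = mul y x) (hunit : ∀ x, mul e x = x)
    (hδ : ∀ x y, δ (mul x y) = mul (δ x) y + mul x (δ y) + mul x y) :
    δ e = -e := by
  have h := hδ e e
  rw [hunit, hunit, hcomm, hunit] at h
  refine eq_neg_of_add_eq_zero_left (add_left_cancel (a := δ e) ?_)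
  rw [← add_assoc, add_zero]
  exact h.symm

theorem apply_opow_eq_zsmul {e n : Θ} (hcomm : ∀ x y, mul x y = mul y x)
    (hunit : ∀ x, mul e x = x) (hmuladd : ∀ x y z, mul x (y + z) = mul x y + mul x z)
    (hδ : ∀ x y, δ (mul x y) = mul (δ x) y + mul x (δ y) + mul x y) (hδn : δ n = 0) (j : ℕ) :
    δ (opow mul e n j) = ((j : ℤ) - 1) • opow mul e n j := by
  induction j with
  | zero => simp [opow, apply_unit_eq_neg hcomm hunit hδ]
  | succ j ih =>
    have hzero : mul 0 (opow mul e n j) = 0 := by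
      rw [hcomm]; exact map_zero (AddMonoidHom.mk' _ (hmuladd _))
    rw [opow, hδ, hδn, hzero, ih, zero_add, map_zsmul_of_map_add (hmuladd n)]
    module

theorem euler_pairing_mul_of_apply_eq_zsmul {O : Type*} [CommRing O] {g : Θ → Θ → O}
    {ε : O → O} {q : O} {p : Θ} {c : ℤ}
    (hmuladd : ∀ x y z, mul x (y + z) = mul x y + mul x z)
    (hgadd2 : ∀ x y z, g x (y + z) = g x y + g x z)
    (hδ : ∀ x y, δ (mul x y) = mul (δ x) y + mul x (δ y) + mul x y)
    (hg : ∀ x y, ε (g x y) - g (δ x) y - g x (δ y) = q * g x y) (hp : δ p = c • p) (x y : Θ) :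
    ε (g x (mul y p)) - g (δ x) (mul y p) - g x (mul (δ y) p) = (q + c + 1) * g x (mul y p) := by
  have hsmul : g x (mul y (c • p)) = c * g x (mul y p) := by
    rw [map_zsmul_of_map_add (hmuladd y), map_zsmul_of_map_add (hgadd2 x), zsmul_eq_mul]
  have h := hg x (mul y p)
  rw [hδ, hgadd2, hgadd2, hp, hsmul] at h
  linear_combination h

end WeightOneDerivation

theorem stmt14_general {O : Type*} [CommRing O] [Algebra ℂ O]
    {Θ : Type*} [AddCommGroup Θ]
    (act : Θ → O → O) (br : Θ → Θ → Θ) (mul : Θ → Θ → Θ)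
    (g : Θ → Θ → O)
    (e E n : Θ) (D : ℂ) (d : ℕ)
    -- Frobenius structure axioms
    (hmulcomm : ∀ x y, mul x y = mul y x)
    (hunit : ∀ x, mul e x = x)
    (hmuladd : ∀ x y z, mul x (y + z) = mul x y + mul x z)
    (hgadd1 : ∀ x y z, g (x + y) z = g x z + g y z)
    (hgadd2 : ∀ x y z, g x (y + z) = g x y + g x z)
    (hE1 : ∀ x y, br E (mul x y) = mul (br E x) y + mul x (br E y) + mul x y)
    (hE3 : ∀ x y, act E (g x y) - g (br E x) y - g x (br E y)
      = algebraMap ℂ O (2 - D) * g x y)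
    -- the nilpotent vector field
    (hEn : br E n = 0) :
    -- the case k ≥ 1 (on representatives x, y ∈ Γ(J_k))
    (∀ k : ℕ, 1 ≤ k → k ≤ d → ∀ x y : Θ,
      act E (g x (mul y (opow mul e n (k - 1))))
          - g (br E x) (mul y (opow mul e n (k - 1)))
          - g x (mul (br E y) (opow mul e n (k - 1)))
        = algebraMap ℂ O (1 - D + (k : ℂ)) * g x (mul y (opow mul e n (k - 1)))) ∧
    -- the case k = 0 (with x = n∘x̃, y = n∘ỹ, [E,y] = n∘([E,ỹ]+ỹ))
    (∀ x y : Θ,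
      act E (g x (mul n y)) - g (br E x + x) (mul n y)
          - g x (mul n (br E y + y))
        = algebraMap ℂ O (1 - D) * g x (mul n y)) := by
  refine ⟨fun k hk _ x y => ?_, fun x y => ?_⟩
  · rw [euler_pairing_mul_of_apply_eq_zsmul hmuladd hgadd2 hE1 hE3
      (apply_opow_eq_zsmul hmulcomm hunit hmuladd hE1 hEn (k - 1))]
    obtain ⟨k, rfl⟩ := Nat.exists_eq_add_of_le' hk
    simp only [Nat.add_sub_cancel, Nat.cast_add, Nat.cast_one, map_sub, map_add, map_one,
      map_ofNat, map_natCast, Int.cast_sub, Int.cast_natCast, Int.cast_one]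
    ring
  · have h := euler_pairing_mul_of_apply_eq_zsmul hmuladd hgadd2 hE1 hE3
      (show br E n = (0 : ℤ) • n by rw [hEn, zero_smul]) x y
    rw [hgadd1, hmuladd, hgadd2, hmulcomm n y, hmulcomm n (br E y),
      show 1 - D = 2 - D - 1 by ring, map_sub, map_one]
    rw [Int.cast_zero, add_zero] at h
    linear_combination h

/-- Euler condition for the pairings of the nilpotent
construction.  For a Frobenius structure `(∘, g, E)` of charge `D` (modelled
algebraically) with a nilpotent vector field `n` (`n^{∘d} = 0`,
`n^{∘(d−1)} ≠ 0`, `[E,n] = 0`, `∇(n∘x) = n∘∇x`):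
for `k ≥ 1` and the pairing `(x,y)_k = ⟨x̃, ỹ∘n^{∘(k−1)}⟩` one has
`E(x,y)_k − ([E,x]_k,y)_k − (x,[E,y]_k)_k = (1 − D + k)(x,y)_k`, and for `k = 0`
with `(n∘x̃, y)₀ = ⟨x̃, y⟩` (and `[E, n∘ỹ] = n∘([E,ỹ] + ỹ)`) one has
`E(x,y)₀ − ([E,x],y)₀ − (x,[E,y])₀ = (1−D)(x,y)₀`. -/
theorem stmt14 {O : Type*} [CommRing O] [Algebra ℂ O]
    {Θ : Type*} [AddCommGroup Θ] [Module O Θ]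
    (act : Θ → O → O) (br : Θ → Θ → Θ) (mul : Θ → Θ → Θ)
    (g : Θ → Θ → O) (conn : Θ → Θ → Θ)
    (e E n : Θ) (D : ℂ) (d : ℕ)
    -- Frobenius structure axioms
    (hmulcomm : ∀ x y, mul x y = mul y x)
    (hmulassoc : ∀ x y z, mul (mul x y) z = mul x (mul y z))
    (hunit : ∀ x, mul e x = x)
    (hmuladd : ∀ x y z, mul x (y + z) = mul x y + mul x z)
    (hbradd : ∀ x y z, br x (y + z) = br x y + br x z)
    (hgadd1 : ∀ x y z, g (x + y) z = g x z + g y z)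
    (hgadd2 : ∀ x y z, g x (y + z) = g x y + g x z)
    (hgsymm : ∀ x y, g x y = g y x)
    (hgfrob : ∀ x y z, g (mul x y) z = g x (mul y z))
    (hE1 : ∀ x y, br E (mul x y) = mul (br E x) y + mul x (br E y) + mul x y)
    (hE3 : ∀ x y, act E (g x y) - g (br E x) y - g x (br E y)
      = algebraMap ℂ O (2 - D) * g x y)
    -- the nilpotent vector field
    (hnil : opow mul e n d = 0) (hne : opow mul e n (d - 1) ≠ 0) (hd : 1 ≤ d)
    (hEn : br E n = 0)
    (hconn_n : ∀ z x, conn z (mul n x) = mul n (conn z x)) :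
    -- the case k ≥ 1 (on representatives x, y ∈ Γ(J_k))
    (∀ k : ℕ, 1 ≤ k → k ≤ d → ∀ x y : Θ,
      act E (g x (mul y (opow mul e n (k - 1))))
          - g (br E x) (mul y (opow mul e n (k - 1)))
          - g x (mul (br E y) (opow mul e n (k - 1)))
        = algebraMap ℂ O (1 - D + (k : ℂ)) * g x (mul y (opow mul e n (k - 1)))) ∧
    -- the case k = 0 (with x = n∘x̃, y = n∘ỹ, [E,y] = n∘([E,ỹ]+ỹ))
    (∀ x y : Θ,
      act E (g x (mul n y)) - g (br E x + x) (mul n y)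
          - g x (mul n (br E y + y))
        = algebraMap ℂ O (1 - D) * g x (mul n y)) :=
  stmt14_general act br mul g e E n D d hmulcomm hunit hmuladd hgadd1 hgadd2 hE1 hE3 hEn
end

section
/- In the algebra A = H*(V,ℂ) for V = ℙ(𝒪_S ⊕ K_S) as above (with the cup product, treating only the classical product), the kernels J_k = Ker(Δ₀^{∪k} ∪ ·) are: J₁ = ℂΓ_{r+1}^∨ ⊕ ⊕ᵢℂΓ_i^∨ ⊕ ℂΔ_{r+1}; J₂ = ⊕ᵢℂ(Γᵢ − (bᵢ^∨/κ)Δ₀) ⊕ ℂΓ_{r+1} ⊕ ⊕ᵢℂΔᵢ ⊕ ℂΔ_{r+1}; J₃ = H^{≥2}(V); J₄ = A; where κ = Σ bᵢbᵢ^∨ ≠ 0. Consequently the filtration I_k = (Δ₀) + J_k is: I₀ = (Δ₀), I₁ = ℂΓ_{r+1}^∨ ⊕ ℂΔ₀ ⊕ ℂΓ_{r+1} ⊕ ⊕ᵢℂΔᵢ ⊕ ℂΔ_{r+1}, I₂ = I₃ = H^{≥2}(V), I₄ = A. -/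
/-!
Write `L` for right multiplication by `Δ₀`, so that `J_k = ker Lᵏ` and `(Δ₀) = range L`. On the
basis, `L` sends `1, Γ_{r+1}, Γᵢ` to `Δ₀, Δ_{r+1}, Δᵢ`, `Δ₀` to `∑ bᵢ Δᵢ`, `Δᵢ` to
`bᵢ^∨ Δ_{r+1}` and `Δ_{r+1}` to `0`; hence `Δ₀³ = κ Δ_{r+1} ≠ 0` and `Δ₀⁴ = 0`. For `k = 1, 2, 3`
the proposed generators lie in `ker Lᵏ`, and together with `W₁ = ⟨1, Γ_{r+1}, Γᵢ⟩`,
`W₂ = ⟨1, Δ₀⟩`, `W₃ = ⟨1⟩` they span `A`, while `Lᵏ` maps the spanning family of `W_k` to an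
independent family (`Δ₀, Δ_{r+1}, Δᵢ`; `Δ₀², Δ₀³`; `Δ₀³`). By the modular law `ker Lᵏ` is exactly
their span. The sums `(Δ₀) + J_k` are then comparisons of explicit spans.
-/

open Submodule
open scoped Matrix

theorem LinearMap.ker_eq_of_linearIndependent_comp {R M N ι : Type*} [Ring R] [AddCommGroup M]
    [Module R M] [AddCommGroup N] [Module R N] {f : M →ₗ[R] N} {S : Submodule R M} {v : ι → M}
    (hS : S ≤ LinearMap.ker f) (hv : LinearIndependent R (f ∘ v))
    (hSv : S ⊔ span R (Set.range v) = ⊤) : LinearMap.ker f = S :=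
  calc LinearMap.ker f = (S ⊔ span R (Set.range v)) ⊓ LinearMap.ker f := by rw [hSv, top_inf_eq]
    _ = S ⊔ span R (Set.range v) ⊓ LinearMap.ker f := sup_inf_assoc_of_le _ hS
    _ = S := by rw [(range_ker_disjoint hv).eq_bot, sup_bot_eq]

theorem linearIndependent_pow_pair {K B : Type*} [Field K] [Ring B] [Algebra K B] {x : B} {n : ℕ}
    (hne : x ^ (n + 1) ≠ 0) (hzero : x ^ (n + 2) = 0) :
    LinearIndependent K ![x ^ n, x ^ (n + 1)] := by
  rw [LinearIndependent.pair_iff]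
  intro s t hst
  have hs : s • x ^ (n + 1) = 0 := by
    simpa [add_mul, smul_mul_assoc, ← pow_succ, hzero] using congrArg (· * x) hst
  obtain rfl : s = 0 := (smul_eq_zero.mp hs).resolve_right hne
  exact ⟨rfl, (smul_eq_zero.mp (by simpa using hst)).resolve_right hne⟩

theorem Matrix.sum_smul_sum_smul_of_mul_eq_one {n R M : Type*} [Fintype n] [DecidableEq n]
    [Semiring R] [AddCommMonoid M] [Module R M] {c a : Matrix n n R} (h : c * a = 1) (v : n → M)
    (i : n) : ∑ j, c i j • ∑ k, a j k • v k = v i := by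
  simp only [Finset.smul_sum, smul_smul]
  rw [Finset.sum_comm]
  simp only [← Finset.sum_smul, ← Matrix.mul_apply, h, Matrix.one_apply, ite_smul, one_smul,
    zero_smul, Finset.sum_ite_eq, Finset.mem_univ, if_true]

section CupAlgebra

variable {A : Type*} [CommRing A] [Algebra ℂ A] {r : ℕ}

def basisFamily (Δ0 Γtop Δtop : A) (Γ Δ : Fin r → A) : Fin 4 ⊕ (Fin r ⊕ Fin r) → A :=
  Sum.elim ![1, Δ0, Γtop, Δtop] (Sum.elim Γ Δ)

structure Delta0MulTable (Δ0 Γtop Δtop : A) (Γ Δ : Fin r → A) (b bv : Fin r → ℂ) : Prop where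
  Δ0_mul_Δ0 : Δ0 * Δ0 = ∑ i, b i • Δ i
  Γtop_mul_Δ0 : Γtop * Δ0 = Δtop
  Δtop_mul_Δ0 : Δtop * Δ0 = 0
  Γ_mul_Δ0 : ∀ i, Γ i * Δ0 = Δ i
  Δ_mul_Δ0 : ∀ i, Δ i * Δ0 = bv i • Δtop

variable {Δ0 Γtop Δtop : A} {Γ Δ : Fin r → A}

theorem eq_top_of_basisFamily_mem {P : Submodule ℂ A}
    (hspan : span ℂ (Set.range (basisFamily Δ0 Γtop Δtop Γ Δ)) = ⊤) (h1 : 1 ∈ P) (hΔ0 : Δ0 ∈ P)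
    (hΓtop : Γtop ∈ P) (hΔtop : Δtop ∈ P) (hΓ : ∀ i, Γ i ∈ P) (hΔ : ∀ i, Δ i ∈ P) : P = ⊤ := by
  rw [eq_top_iff, ← hspan, span_le, Set.range_subset_iff]
  rintro (i | i | i)
  · fin_cases i
    exacts [h1, hΔ0, hΓtop, hΔtop]
  exacts [hΓ i, hΔ i]

namespace Delta0MulTable

variable {b bv : Fin r → ℂ}

theorem pow_three (T : Delta0MulTable Δ0 Γtop Δtop Γ Δ b bv) :
    Δ0 ^ 3 = (∑ i, b i * bv i) • Δtop := by
  rw [pow_succ, sq, T.Δ0_mul_Δ0, Finset.sum_mul]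
  simp only [smul_mul_assoc, T.Δ_mul_Δ0, smul_smul, Finset.sum_smul]

theorem pow_four (T : Delta0MulTable Δ0 Γtop Δtop Γ Δ b bv) : Δ0 ^ 4 = 0 := by
  rw [pow_succ, T.pow_three, smul_mul_assoc, T.Δtop_mul_Δ0, smul_zero]

theorem pow_three_ne_zero (T : Delta0MulTable Δ0 Γtop Δtop Γ Δ b bv)
    (hli : LinearIndependent ℂ (basisFamily Δ0 Γtop Δtop Γ Δ)) (hκ : ∑ i, b i * bv i ≠ 0) :
    Δ0 ^ 3 ≠ 0 := by
  rw [T.pow_three]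
  exact smul_ne_zero hκ (LinearIndependent.ne_zero (Sum.inl 3) hli)

theorem range_mulRight (T : Delta0MulTable Δ0 Γtop Δtop Γ Δ b bv)
    (hspan : span ℂ (Set.range (basisFamily Δ0 Γtop Δtop Γ Δ)) = ⊤) :
    LinearMap.range (LinearMap.mulRight ℂ Δ0) = span ℂ ({Δ0, Δtop} ∪ Set.range Δ) := by
  apply le_antisymm
  · rw [LinearMap.range_eq_map, ← hspan, map_span, span_le, ← Set.range_comp, Set.range_subset_iff]
    rintro (i | i | i) <;> simp only [Function.comp_apply, LinearMap.mulRight_apply, basisFamily,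
      Sum.elim_inl, Sum.elim_inr, SetLike.mem_coe]
    · fin_cases i <;> simp only [Fin.zero_eta, Fin.mk_one, Fin.reduceFinMk, Matrix.cons_val,
        one_mul, T.Δ0_mul_Δ0, T.Γtop_mul_Δ0, T.Δtop_mul_Δ0]
      · exact subset_span (by simp)
      · exact sum_mem fun i _ => smul_mem _ _ (subset_span (by simp))
      · exact subset_span (by simp)
      · exact zero_mem _
    · rw [T.Γ_mul_Δ0]; exact subset_span (by simp)
    · rw [T.Δ_mul_Δ0]; exact smul_mem _ _ (subset_span (by simp))
  · rw [span_le]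
    rintro _ ((rfl | rfl) | ⟨i, rfl⟩)
    exacts [⟨1, one_mul _⟩, ⟨Γtop, T.Γtop_mul_Δ0⟩, ⟨Γ i, T.Γ_mul_Δ0 i⟩]

theorem linearIndependent_mulRight_comp (T : Delta0MulTable Δ0 Γtop Δtop Γ Δ b bv)
    (hli : LinearIndependent ℂ (basisFamily Δ0 Γtop Δtop Γ Δ)) :
    LinearIndependent ℂ (LinearMap.mulRight ℂ Δ0 ∘ Sum.elim ![1, Γtop] Γ) := by
  have hg : Function.Injective (Sum.elim ![.inl 1, .inl 3] (Sum.inr ∘ Sum.inr) :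
      Fin 2 ⊕ Fin r → Fin 4 ⊕ (Fin r ⊕ Fin r)) := by
    refine Function.Injective.sumElim ?_ (Sum.inr_injective.comp Sum.inr_injective) (by simp)
    intro i j h; fin_cases i <;> fin_cases j <;> simp_all
  have hcomp : LinearMap.mulRight ℂ Δ0 ∘ Sum.elim ![1, Γtop] Γ =
      basisFamily Δ0 Γtop Δtop Γ Δ ∘ Sum.elim ![.inl 1, .inl 3] (Sum.inr ∘ Sum.inr) := by
    ext (i | i)
    · fin_cases i <;> simp [basisFamily, T.Γtop_mul_Δ0]
    · simp [basisFamily, T.Γ_mul_Δ0]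
  rw [hcomp]
  exact hli.comp _ hg

theorem ker_mulRight_pow_one (T : Delta0MulTable Δ0 Γtop Δtop Γ Δ b bv)
    (hli : LinearIndependent ℂ (basisFamily Δ0 Γtop Δtop Γ Δ))
    (hspan : span ℂ (Set.range (basisFamily Δ0 Γtop Δtop Γ Δ)) = ⊤)
    {a c : Matrix (Fin r) (Fin r) ℂ} (hac : a * c = 1) (hbv : bv = c *ᵥ b) :
    LinearMap.ker (LinearMap.mulRight ℂ (Δ0 ^ 1)) = span ℂ ({Δ0 - ∑ k, b k • Γ k, Δtop} ∪
      Set.range (fun i => (∑ j, a i j • Δ j) - b i • Γtop)) := by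
  have hab : ∀ i, ∑ j, a i j * bv j = b i :=
    congrFun (show a *ᵥ bv = b by rw [hbv, Matrix.mulVec_mulVec, hac, Matrix.one_mulVec])
  rw [pow_one]
  refine LinearMap.ker_eq_of_linearIndependent_comp (v := Sum.elim ![1, Γtop] Γ) ?_ ?_ ?_
  · rw [span_le]
    rintro _ ((rfl | rfl) | ⟨i, rfl⟩) <;>
      simp only [SetLike.mem_coe, LinearMap.mem_ker, LinearMap.mulRight_apply]
    · simp [sub_mul, Finset.sum_mul, T.Δ0_mul_Δ0, T.Γ_mul_Δ0]
    · exact T.Δtop_mul_Δ0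
    · simp only [sub_mul, Finset.sum_mul, smul_mul_assoc, T.Δ_mul_Δ0, T.Γtop_mul_Δ0, smul_smul,
        ← Finset.sum_smul, hab, sub_self]
  · exact T.linearIndependent_mulRight_comp hli
  · refine eq_top_of_basisFamily_mem hspan (mem_sup_right (subset_span ⟨.inl 0, rfl⟩)) ?_
      (mem_sup_right (subset_span ⟨.inl 1, rfl⟩)) (mem_sup_left (subset_span (by simp)))
      (fun i => mem_sup_right (subset_span ⟨.inr i, rfl⟩)) fun i => ?_
    · rw [← sub_add_cancel Δ0 (∑ k, b k • Γ k)]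
      exact add_mem (mem_sup_left (subset_span (by simp)))
        (mem_sup_right (sum_mem fun k _ => smul_mem _ _ (subset_span ⟨.inr k, rfl⟩)))
    · rw [← Matrix.sum_smul_sum_smul_of_mul_eq_one (mul_eq_one_comm.mp hac) Δ i]
      refine sum_mem fun j _ => smul_mem _ _ ?_
      rw [← sub_add_cancel (∑ k, a j k • Δ k) (b j • Γtop)]
      exact add_mem (mem_sup_left (subset_span (by simp)))
        (mem_sup_right (smul_mem _ _ (subset_span ⟨.inl 1, rfl⟩)))

theorem ker_mulRight_pow_two (T : Delta0MulTable Δ0 Γtop Δtop Γ Δ b bv)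
    (hli : LinearIndependent ℂ (basisFamily Δ0 Γtop Δtop Γ Δ))
    (hspan : span ℂ (Set.range (basisFamily Δ0 Γtop Δtop Γ Δ)) = ⊤)
    {κ : ℂ} (hκ : κ = ∑ i, b i * bv i) (hκ0 : κ ≠ 0) :
    LinearMap.ker (LinearMap.mulRight ℂ (Δ0 ^ 2)) = span ℂ
      ({Γtop, Δtop} ∪ Set.range (fun i => Γ i - (bv i / κ) • Δ0) ∪ Set.range Δ) := by
  refine LinearMap.ker_eq_of_linearIndependent_comp (v := ![1, Δ0]) ?_ ?_ ?_
  · rw [span_le]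
    rintro _ (((rfl | rfl) | ⟨i, rfl⟩) | ⟨i, rfl⟩) <;>
      simp only [SetLike.mem_coe, LinearMap.mem_ker, LinearMap.mulRight_apply]
    · rw [sq, ← mul_assoc, T.Γtop_mul_Δ0, T.Δtop_mul_Δ0]
    · rw [sq, ← mul_assoc, T.Δtop_mul_Δ0, zero_mul]
    · rw [sub_mul, smul_mul_assoc, ← pow_succ', T.pow_three, ← hκ, sq, ← mul_assoc, T.Γ_mul_Δ0,
        T.Δ_mul_Δ0, smul_smul, div_mul_cancel₀ _ hκ0, sub_self]
    · rw [sq, ← mul_assoc, T.Δ_mul_Δ0, smul_mul_assoc, T.Δtop_mul_Δ0, smul_zero]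
  · have hcomp : LinearMap.mulRight ℂ (Δ0 ^ 2) ∘ ![1, Δ0] = ![Δ0 ^ 2, Δ0 ^ (2 + 1)] := by
      ext i; fin_cases i <;> simp [← pow_succ']
    rw [hcomp]
    exact linearIndependent_pow_pair (T.pow_three_ne_zero hli (hκ ▸ hκ0)) T.pow_four
  · refine eq_top_of_basisFamily_mem hspan (mem_sup_right (subset_span ⟨0, rfl⟩))
      (mem_sup_right (subset_span ⟨1, rfl⟩)) (mem_sup_left (subset_span (by simp)))
      (mem_sup_left (subset_span (by simp))) (fun i => ?_)
      (fun i => mem_sup_left (subset_span (by simp)))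
    rw [← sub_add_cancel (Γ i) ((bv i / κ) • Δ0)]
    exact add_mem (mem_sup_left (subset_span (by simp)))
      (mem_sup_right (smul_mem _ _ (subset_span ⟨1, rfl⟩)))

theorem ker_mulRight_pow_three (T : Delta0MulTable Δ0 Γtop Δtop Γ Δ b bv)
    (hli : LinearIndependent ℂ (basisFamily Δ0 Γtop Δtop Γ Δ))
    (hspan : span ℂ (Set.range (basisFamily Δ0 Γtop Δtop Γ Δ)) = ⊤)
    (hκ : ∑ i, b i * bv i ≠ 0) :
    LinearMap.ker (LinearMap.mulRight ℂ (Δ0 ^ 3)) =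
      span ℂ ({Δ0, Γtop, Δtop} ∪ Set.range Γ ∪ Set.range Δ) := by
  refine LinearMap.ker_eq_of_linearIndependent_comp (v := ![(1 : A)]) ?_ ?_ ?_
  · rw [span_le]
    rintro _ (((rfl | rfl | rfl) | ⟨i, rfl⟩) | ⟨i, rfl⟩) <;>
      simp only [SetLike.mem_coe, LinearMap.mem_ker, LinearMap.mulRight_apply]
    · rw [← pow_succ', T.pow_four]
    all_goals simp only [pow_succ, pow_zero, mul_one, ← mul_assoc, T.Γtop_mul_Δ0, T.Δtop_mul_Δ0,
      T.Γ_mul_Δ0, T.Δ_mul_Δ0, smul_mul_assoc, zero_mul, smul_zero]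
  · rw [linearIndependent_unique_iff]
    simpa using T.pow_three_ne_zero hli hκ
  · exact eq_top_of_basisFamily_mem hspan (mem_sup_right (subset_span ⟨0, rfl⟩))
      (mem_sup_left (subset_span (by simp))) (mem_sup_left (subset_span (by simp)))
      (mem_sup_left (subset_span (by simp))) (fun i => mem_sup_left (subset_span (by simp)))
      (fun i => mem_sup_left (subset_span (by simp)))

theorem ker_mulRight_pow_four (T : Delta0MulTable Δ0 Γtop Δtop Γ Δ b bv) :
    LinearMap.ker (LinearMap.mulRight ℂ (Δ0 ^ 4)) = ⊤ := by
  rw [T.pow_four, LinearMap.mulRight_zero_eq_zero, LinearMap.ker_zero]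

theorem range_sup_ker_mulRight_pow_one (T : Delta0MulTable Δ0 Γtop Δtop Γ Δ b bv)
    (hli : LinearIndependent ℂ (basisFamily Δ0 Γtop Δtop Γ Δ))
    (hspan : span ℂ (Set.range (basisFamily Δ0 Γtop Δtop Γ Δ)) = ⊤)
    {a c : Matrix (Fin r) (Fin r) ℂ} (hac : a * c = 1) (hbv : bv = c *ᵥ b) (hb : b ≠ 0) :
    LinearMap.range (LinearMap.mulRight ℂ Δ0) ⊔ LinearMap.ker (LinearMap.mulRight ℂ (Δ0 ^ 1)) =
      span ℂ ({Δ0 - ∑ k, b k • Γ k, Δ0, Γtop, Δtop} ∪ Set.range Δ) := by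
  rw [T.range_mulRight hspan, T.ker_mulRight_pow_one hli hspan hac hbv, ← span_union]
  apply span_eq_span
  · rintro _ (((rfl | rfl) | ⟨i, rfl⟩) | ((rfl | rfl) | ⟨i, rfl⟩)) <;> rw [SetLike.mem_coe]
    any_goals (apply subset_span; simp; done)
    exact sub_mem (sum_mem fun j _ => smul_mem _ _ (subset_span (by simp)))
      (smul_mem _ _ (subset_span (by simp)))
  · rintro x ((rfl | rfl | hx | rfl) | ⟨i, rfl⟩) <;> rw [SetLike.mem_coe]
    any_goals (apply subset_span; simp; done)
    obtain ⟨i, hi⟩ := Function.ne_iff.mp hb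
    rw [hx, ← smul_mem_iff _ hi, ← sub_sub_cancel (∑ j, a i j • Δ j) (b i • Γtop)]
    exact sub_mem (sum_mem fun j _ => smul_mem _ _ (subset_span (by simp))) (subset_span (by simp))

theorem range_sup_ker_mulRight_pow_two (T : Delta0MulTable Δ0 Γtop Δtop Γ Δ b bv)
    (hli : LinearIndependent ℂ (basisFamily Δ0 Γtop Δtop Γ Δ))
    (hspan : span ℂ (Set.range (basisFamily Δ0 Γtop Δtop Γ Δ)) = ⊤)
    {κ : ℂ} (hκ : κ = ∑ i, b i * bv i) (hκ0 : κ ≠ 0) :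
    LinearMap.range (LinearMap.mulRight ℂ Δ0) ⊔ LinearMap.ker (LinearMap.mulRight ℂ (Δ0 ^ 2)) =
      span ℂ ({Δ0, Γtop, Δtop} ∪ Set.range Γ ∪ Set.range Δ) := by
  rw [T.range_mulRight hspan, T.ker_mulRight_pow_two hli hspan hκ hκ0, ← span_union]
  apply span_eq_span
  · rintro _ (((rfl | rfl) | ⟨i, rfl⟩) | (((rfl | rfl) | ⟨i, rfl⟩) | ⟨i, rfl⟩)) <;>
      rw [SetLike.mem_coe]
    any_goals (apply subset_span; simp; done)
    exact sub_mem (subset_span (by simp)) (smul_mem _ _ (subset_span (by simp)))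
  · rintro _ (((rfl | rfl | rfl) | ⟨i, rfl⟩) | ⟨i, rfl⟩) <;> rw [SetLike.mem_coe]
    any_goals (apply subset_span; simp; done)
    rw [← sub_add_cancel (Γ i) ((bv i / κ) • Δ0)]
    exact add_mem (subset_span (by simp)) (smul_mem _ _ (subset_span (by simp)))

theorem range_sup_ker_mulRight_pow_three (T : Delta0MulTable Δ0 Γtop Δtop Γ Δ b bv)
    (hli : LinearIndependent ℂ (basisFamily Δ0 Γtop Δtop Γ Δ))
    (hspan : span ℂ (Set.range (basisFamily Δ0 Γtop Δtop Γ Δ)) = ⊤)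
    (hκ : ∑ i, b i * bv i ≠ 0) :
    LinearMap.range (LinearMap.mulRight ℂ Δ0) ⊔ LinearMap.ker (LinearMap.mulRight ℂ (Δ0 ^ 3)) =
      span ℂ ({Δ0, Γtop, Δtop} ∪ Set.range Γ ∪ Set.range Δ) := by
  rw [T.range_mulRight hspan, T.ker_mulRight_pow_three hli hspan hκ, sup_eq_right]
  refine span_mono ?_
  rintro _ ((rfl | rfl) | h)
  exacts [by simp, by simp, Or.inr h]

end Delta0MulTable

end CupAlgebra

theorem stmt16_general {A : Type*} [CommRing A] [Algebra ℂ A]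
    (r : ℕ) (Γ0 Δ0 Γtop Δtop : A) (Γ Δ : Fin r → A)
    (c : Fin r → Fin r → ℂ) (a : Fin r → Fin r → ℂ) (b : Fin r → ℂ)
    (bv : Fin r → ℂ) (hbv : ∀ i, bv i = ∑ j, b j * c j i)
    (κ : ℂ) (hκ : κ = ∑ i, b i * bv i) (hκne : κ ≠ 0)
    (hcsymm : ∀ i j, c i j = c j i)
    (hainv : ∀ i j, (∑ k, a i k * c k j) = if i = j then (1 : ℂ) else 0)
    -- cup product relations
    (hone : Γ0 = 1)
    (hGD0 : ∀ i, Γ i * Δ0 = Δ i)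
    (hTD0 : Γtop * Δ0 = Δtop)
    (hD00 : Δ0 * Δ0 = ∑ i, b i • Δ i)
    (hD0D : ∀ j, Δ0 * Δ j = bv j • Δtop)
    (hD0Dt : Δ0 * Δtop = 0)
    -- the listed classes form a basis of A
    (bA : Module.Basis (Fin 4 ⊕ (Fin r ⊕ Fin r)) ℂ A)
    (hbA : ∀ u, bA u = Sum.elim ![Γ0, Δ0, Γtop, Δtop] (Sum.elim Γ Δ) u) :
    let J : ℕ → Submodule ℂ A := fun k => LinearMap.ker (LinearMap.mulRight ℂ (Δ0 ^ k))
    let I0 : Submodule ℂ A := LinearMap.range (LinearMap.mulRight ℂ Δ0)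
    let Hge2 : Submodule ℂ A :=
      Submodule.span ℂ ({Δ0, Γtop, Δtop} ∪ Set.range Γ ∪ Set.range Δ)
    -- the kernels J_k
    (J 1 = Submodule.span ℂ
      ({Δ0 - ∑ k, b k • Γ k, Δtop} ∪
        Set.range (fun i => (∑ j, a i j • Δ j) - b i • Γtop))) ∧
    (J 2 = Submodule.span ℂ
      ({Γtop, Δtop} ∪ Set.range (fun i => Γ i - (bv i / κ) • Δ0) ∪ Set.range Δ)) ∧
    (J 3 = Hge2) ∧
    (J 4 = ⊤) ∧
    -- the filtration I_k = (Δ₀) + J_k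
    (I0 ⊔ J 1 = Submodule.span ℂ
      ({Δ0 - ∑ k, b k • Γ k, Δ0, Γtop, Δtop} ∪ Set.range Δ)) ∧
    (I0 ⊔ J 2 = Hge2) ∧
    (I0 ⊔ J 3 = Hge2) ∧
    (I0 ⊔ J 4 = ⊤) := by
  intro J I0 Hge2
  subst hone
  have T : Delta0MulTable Δ0 Γtop Δtop Γ Δ b bv :=
    ⟨hD00, hTD0, mul_comm Δtop Δ0 ▸ hD0Dt, hGD0, fun j => mul_comm Δ0 (Δ j) ▸ hD0D j⟩
  have he : ⇑bA = basisFamily Δ0 Γtop Δtop Γ Δ := funext hbA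
  have hli := he ▸ bA.linearIndependent
  have hspan := he ▸ bA.span_eq
  have hac : Matrix.of a * Matrix.of c = 1 := by
    ext i j; simpa [Matrix.mul_apply, Matrix.one_apply] using hainv i j
  have hbvc : bv = Matrix.of c *ᵥ b := by
    ext i; simp [hbv, Matrix.mulVec, dotProduct, hcsymm i, mul_comm]
  have hb : b ≠ 0 := by
    rintro rfl
    simp [hκ] at hκne
  have hκ' : ∑ i, b i * bv i ≠ 0 := hκ ▸ hκne
  refine ⟨T.ker_mulRight_pow_one hli hspan hac hbvc, T.ker_mulRight_pow_two hli hspan hκ hκne,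
    T.ker_mulRight_pow_three hli hspan hκ', T.ker_mulRight_pow_four,
    T.range_sup_ker_mulRight_pow_one hli hspan hac hbvc hb,
    T.range_sup_ker_mulRight_pow_two hli hspan hκ hκne,
    T.range_sup_ker_mulRight_pow_three hli hspan hκ', ?_⟩
  simp only [J, T.ker_mulRight_pow_four, sup_top_eq]

/-- in `A = H*(V,ℂ)` for `V = ℙ(𝒪_S ⊕ K_S)` (classical cup
product), the kernels `J_k = Ker(Δ₀^k ∪ ·)` and the filtration
`I_k = (Δ₀) + J_k` are as computed in §7.4 of the paper. -/
theorem stmt16 {A : Type*} [CommRing A] [Algebra ℂ A]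
    (r : ℕ) (Γ0 Δ0 Γtop Δtop : A) (Γ Δ : Fin r → A)
    (c : Fin r → Fin r → ℂ) (a : Fin r → Fin r → ℂ) (b : Fin r → ℂ)
    (bv : Fin r → ℂ) (hbv : ∀ i, bv i = ∑ j, b j * c j i)
    (κ : ℂ) (hκ : κ = ∑ i, b i * bv i) (hκne : κ ≠ 0)
    (hcsymm : ∀ i j, c i j = c j i)
    (hainv : ∀ i j, (∑ k, a i k * c k j) = if i = j then (1 : ℂ) else 0)
    -- cup product relations
    (hone : Γ0 = 1)
    (hGG : ∀ i j, Γ i * Γ j = c i j • Γtop)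
    (hGT : ∀ i, Γ i * Γtop = 0)
    (hGD : ∀ i j, Γ i * Δ j = c i j • Δtop)
    (hGD0 : ∀ i, Γ i * Δ0 = Δ i)
    (hTD0 : Γtop * Δ0 = Δtop)
    (hTT : Γtop * Γtop = 0)
    (hTD : ∀ j, Γtop * Δ j = 0)
    (hD00 : Δ0 * Δ0 = ∑ i, b i • Δ i)
    (hD0D : ∀ j, Δ0 * Δ j = bv j • Δtop)
    (hDD : ∀ i j, Δ i * Δ j = 0)
    (hGDt : ∀ i, Γ i * Δtop = 0)
    (hD0Dt : Δ0 * Δtop = 0)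
    (hTDt : Γtop * Δtop = 0)
    (hDDt : ∀ i, Δ i * Δtop = 0)
    (hDtDt : Δtop * Δtop = 0)
    -- the listed classes form a basis of A
    (bA : Module.Basis (Fin 4 ⊕ (Fin r ⊕ Fin r)) ℂ A)
    (hbA : ∀ u, bA u = Sum.elim ![Γ0, Δ0, Γtop, Δtop] (Sum.elim Γ Δ) u) :
    let J : ℕ → Submodule ℂ A := fun k => LinearMap.ker (LinearMap.mulRight ℂ (Δ0 ^ k))
    let I0 : Submodule ℂ A := LinearMap.range (LinearMap.mulRight ℂ Δ0)
    let Hge2 : Submodule ℂ A :=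
      Submodule.span ℂ ({Δ0, Γtop, Δtop} ∪ Set.range Γ ∪ Set.range Δ)
    -- the kernels J_k
    (J 1 = Submodule.span ℂ
      ({Δ0 - ∑ k, b k • Γ k, Δtop} ∪
        Set.range (fun i => (∑ j, a i j • Δ j) - b i • Γtop))) ∧
    (J 2 = Submodule.span ℂ
      ({Γtop, Δtop} ∪ Set.range (fun i => Γ i - (bv i / κ) • Δ0) ∪ Set.range Δ)) ∧
    (J 3 = Hge2) ∧
    (J 4 = ⊤) ∧
    -- the filtration I_k = (Δ₀) + J_k
    (I0 ⊔ J 1 = Submodule.span ℂ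
      ({Δ0 - ∑ k, b k • Γ k, Δ0, Γtop, Δtop} ∪ Set.range Δ)) ∧
    (I0 ⊔ J 2 = Hge2) ∧
    (I0 ⊔ J 3 = Hge2) ∧
    (I0 ⊔ J 4 = ⊤) :=
  stmt16_general r Γ0 Δ0 Γtop Δtop Γ Δ c a b bv hbv κ hκ hκne hcsymm hainv hone hGD0 hTD0 hD00 hD0D
    hD0Dt bA hbA
end
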